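/- arXiv:2110.08004 — 5 statements merged into one kernel-verified Lean document; each statement's English description precedes it below -/
import Mathlib

section
/- Let G be a finite simple graph with an nd-decomposition P_1, ..., P_k. Then there exists a proper coloring of G using exactly χ(G) colors (where χ(G) is the chromatic number of G) such that every part P_i that induces an independent set in G is monochromatic (all vertices of P_i receive the same color), and every part P_i that induces a clique meets each color class in at most one vertex. -/
/-- A set of vertices is independent if no two of its vertices are adjacent. -/
def SimpleGraph.IsIndep {V : Type*} (G : SimpleGraph V) (s : Set V) : Prop :=
  s.Pairwise fun u v => ¬ G.Adj u v

/-- If `G` has an nd-decomposition `P_1, …, P_k`, then `G` has a proper coloring with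
exactly `χ(G)` colors in which every part inducing an independent set is monochromatic,
and every part inducing a clique meets each color class in at most one vertex. -/
theorem exists_canonical_optimal_coloring {V : Type*} [Fintype V] (G : SimpleGraph V)
    (k : ℕ) (P : Fin k → Set V)
    (hpart : ∀ v : V, ∃! i : Fin k, v ∈ P i)
    (hcliqueIndep : ∀ i : Fin k, G.IsClique (P i) ∨ G.IsIndep (P i))
    (hhom : ∀ i j : Fin k, i ≠ j →
      (∀ u ∈ P i, ∀ v ∈ P j, G.Adj u v) ∨ (∀ u ∈ P i, ∀ v ∈ P j, ¬ G.Adj u v)) :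
    ∃ n : ℕ, G.chromaticNumber = (n : ℕ∞) ∧
      ∃ C : G.Coloring (Fin n),
        (∀ i : Fin k, G.IsIndep (P i) → ∀ u ∈ P i, ∀ v ∈ P i, C u = C v) ∧
        (∀ i : Fin k, G.IsClique (P i) → ∀ u ∈ P i, ∀ v ∈ P i, C u = C v → u = v) := by
  classical
  set n : ℕ := (G.chromaticNumber).toNat with hn
  have hcol : G.Colorable n := G.colorable_chromaticNumber_of_fintype
  have hne : G.chromaticNumber ≠ ⊤ :=
    SimpleGraph.chromaticNumber_ne_top_iff_exists.2 ⟨Fintype.card V, G.colorable_of_fintype⟩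
  have hχ : G.chromaticNumber = (n : ℕ∞) := by
    rw [hn, ENat.coe_toNat hne]
  refine ⟨n, hχ, ?_⟩
  by_cases hV : IsEmpty V
  · refine ⟨SimpleGraph.Coloring.mk (fun v => isEmptyElim v)
      (fun {v w} _ => isEmptyElim v), ?_, ?_⟩
    · intro i _ u hu; exact isEmptyElim u
    · intro i _ u hu; exact isEmptyElim u
  · haveI : Nonempty V := not_isEmpty_iff.1 hV
    haveI : Inhabited V := Classical.inhabited_of_nonempty ‹_›
    obtain ⟨C0⟩ := hcol
    -- the part of each vertex
    set part : V → Fin k := fun v => (hpart v).choose with hpartdef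
    have hmem : ∀ v, v ∈ P (part v) := fun v => (hpart v).choose_spec.1
    have huniq : ∀ v i, v ∈ P i → part v = i := fun v i hi =>
      ((hpart v).choose_spec.2 i hi).symm
    -- a representative of each nonempty part
    set rep : Fin k → V := fun i => if h : (P i).Nonempty then h.choose else default
      with hrepdef
    have hrep : ∀ i, (P i).Nonempty → rep i ∈ P i := by
      intro i h
      simp only [hrepdef, dif_pos h]
      exact h.choose_spec
    -- the modified vertex map
    set g : V → V := fun v => if G.IsIndep (P (part v)) then rep (part v) else v
      with hgdef
    have hg : ∀ v, g v ∈ P (part v) := by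
      intro v
      by_cases h : G.IsIndep (P (part v))
      · simp only [hgdef, if_pos h]
        exact hrep _ ⟨v, hmem v⟩
      · simp only [hgdef, if_neg h]
        exact hmem v
    have hvalid : ∀ {u v : V}, G.Adj u v → C0 (g u) ≠ C0 (g v) := by
      intro u v huv
      by_cases hij : part u = part v
      · -- same part: it cannot be independent
        have hind : ¬ G.IsIndep (P (part u)) := by
          intro h
          exact h (hmem u) (hij ▸ hmem v) (G.ne_of_adj huv) huv
        have hind' : ¬ G.IsIndep (P (part v)) := hij ▸ hind
        simp only [hgdef, if_neg hind, if_neg hind']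
        exact C0.valid huv
      · rcases hhom (part u) (part v) hij with hall | hnone
        · exact C0.valid (hall _ (hg u) _ (hg v))
        · exact absurd huv (hnone _ (hmem u) _ (hmem v))
    refine ⟨SimpleGraph.Coloring.mk (fun v => C0 (g v)) hvalid, ?_, ?_⟩
    · intro i hind u hu v hv
      have hpu : part u = i := huniq u i hu
      have hpv : part v = i := huniq v i hv
      show C0 (g u) = C0 (g v)
      simp only [hgdef, hpu, hpv, if_pos hind]
    · intro i hcl u hu v hv hC
      by_cases hind : G.IsIndep (P i)
      · by_contra hne'
        exact hind hu hv hne' (hcl hu hv hne')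
      · have hpu : part u = i := huniq u i hu
        have hpv : part v = i := huniq v i hv
        have hC' : C0 (g u) = C0 (g v) := hC
        simp only [hgdef, hpu, hpv, if_neg hind] at hC'
        by_contra hne'
        exact C0.valid (hcl hu hv hne') hC'
end

section
/- Let G be a finite simple graph with an nd-decomposition P_1, ..., P_k, let T be the associated type graph on {1, ..., k}, and let 𝓘 denote the family of maximal independent sets of T. Suppose x : 𝓘 → ℕ satisfies: for each i such that P_i induces a clique, Σ_{I ∈ 𝓘, i ∈ I} x(I) ≥ |P_i|; and for each i such that P_i induces an independent set, Σ_{I ∈ 𝓘, i ∈ I} x(I) ≥ 1. Then G admits a proper coloring with Σ_{I ∈ 𝓘} x(I) colors, i.e., χ(G) ≤ Σ_{I ∈ 𝓘} x(I). -/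
/-- The type graph of a partition `P` of the vertices of `G`: distinct indices `i, j` are
adjacent iff all edges between `P i` and `P j` are present in `G`. -/
def typeGraph {V : Type*} (G : SimpleGraph V) {k : ℕ} (P : Fin k → Finset V) :
    SimpleGraph (Fin k) where
  Adj i j := i ≠ j ∧ ∀ u ∈ P i, ∀ v ∈ P j, G.Adj u v
  symm := by
    constructor
    intro i j h
    exact ⟨h.1.symm, fun u hu v hv => (h.2 v hv u hu).symm⟩
  loopless := by
    constructor
    intro i h
    exact h.1 rfl

open Classical in
/-- The family of maximal independent sets of a graph on `Fin k`. -/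
noncomputable def maxIndepSets {k : ℕ} (T : SimpleGraph (Fin k)) :
    Finset (Finset (Fin k)) :=
  Finset.univ.filter fun I =>
    T.IsIndep ↑I ∧ ∀ J : Finset (Fin k), T.IsIndep ↑J → I ⊆ J → I = J

/-!
Colour with pairs `(I, c)`, where `I` is a maximal independent set of the type graph `T` and
`c < x I`. The part `P i` draws its colours from the pairs with `i ∈ I`: injectively if it is a
clique (there are at least `|P i|` of them), all the same colour if it is independent. An edge
between different parts `P i`, `P j` makes `i` and `j` adjacent in `T` by homogeneity, and no
independent set of `T` contains both, so the two palettes are disjoint.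
-/

theorem Finset.exists_mapsTo_injOn_of_card_le {α β : Type*} [Nonempty β] {s : Finset α}
    {t : Finset β} (h : s.card ≤ t.card) :
    ∃ f : α → β, Set.MapsTo f s t ∧ Set.InjOn f s := by
  classical
  obtain ⟨e⟩ := Function.Embedding.nonempty_of_card_le (α := s) (β := t) (by simpa using h)
  refine ⟨fun a => if ha : a ∈ s then e ⟨a, ha⟩ else Classical.arbitrary β,
    fun a ha => by simp [Finset.mem_coe.mp ha], fun a ha b hb hab => ?_⟩
  simp only [Finset.mem_coe] at ha hb
  simp only [ha, hb, dite_true] at hab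
  exact congrArg Subtype.val (e.injective (Subtype.val_injective hab))

namespace SimpleGraph

variable {V α : Type*} (G : SimpleGraph V)

theorem colorable_card_of_forall_mem {s : Finset α} (f : V → α) (hf : ∀ v, f v ∈ s)
    (hadj : ∀ u v, G.Adj u v → f u ≠ f v) : G.Colorable s.card := by
  simpa using (Coloring.mk (fun v => (⟨f v, hf v⟩ : s))
    fun huv h => hadj _ _ huv (congrArg Subtype.val h)).colorable

theorem exists_mapsTo_adj_ne_of_isClique_or_isIndep [Nonempty α] {s : Finset V}
    {S : Finset α} (hs : G.IsClique s ∨ G.IsIndep s) (hclq : G.IsClique s → s.card ≤ S.card)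
    (hind : G.IsIndep s → 1 ≤ S.card) :
    ∃ f : V → α, Set.MapsTo f s S ∧ ∀ u ∈ s, ∀ v ∈ s, G.Adj u v → f u ≠ f v := by
  rcases hs with hs | hs
  · obtain ⟨f, hfS, hfinj⟩ := Finset.exists_mapsTo_injOn_of_card_le (hclq hs)
    exact ⟨f, hfS, fun u hu v hv huv h => G.ne_of_adj huv (hfinj hu hv h)⟩
  · obtain ⟨c, hc⟩ := Finset.card_pos.mp (hind hs)
    exact ⟨fun _ => c, fun _ _ => hc, fun u hu v hv huv _ => hs hu hv (G.ne_of_adj huv) huv⟩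

end SimpleGraph

section TypeGraph

variable {V : Type*} {G : SimpleGraph V} {k : ℕ} {P : Fin k → Finset V}

theorem typeGraph_adj_of_adj {i j : Fin k}
    (hhom : (∀ u ∈ P i, ∀ v ∈ P j, G.Adj u v) ∨ (∀ u ∈ P i, ∀ v ∈ P j, ¬ G.Adj u v))
    (hij : i ≠ j) {u v : V} (hu : u ∈ P i) (hv : v ∈ P j) (huv : G.Adj u v) :
    (typeGraph G P).Adj i j :=
  ⟨hij, hhom.resolve_right fun h => h u hu v hv huv⟩

theorem isIndep_of_mem_maxIndepSets {T : SimpleGraph (Fin k)} {I : Finset (Fin k)}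
    (hI : I ∈ maxIndepSets T) : T.IsIndep I := by
  classical
  exact (Finset.mem_filter.mp hI).2.1

end TypeGraph

section Palette

variable {ι : Type*} [DecidableEq ι] (𝓘 : Finset (Finset ι)) (x : Finset ι → ℕ)

/-- The colour `(I, c)`, for `I ∈ 𝓘` and `c < x I`, is the `c`-th copy of the class `I`. -/
def palette (i : ι) : Finset (Σ _ : Finset ι, ℕ) :=
  (𝓘.filter fun I => i ∈ I).sigma fun I => Finset.range (x I)

theorem card_palette (i : ι) :
    (palette 𝓘 x i).card = ∑ I ∈ 𝓘.filter (fun I => i ∈ I), x I := by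
  simp [palette]

theorem palette_subset (i : ι) :
    palette 𝓘 x i ⊆ 𝓘.sigma fun I => Finset.range (x I) :=
  Finset.sigma_mono (Finset.filter_subset _ _) fun _ => subset_rfl

theorem disjoint_palette_of_adj {T : SimpleGraph ι} (h𝓘 : ∀ I ∈ 𝓘, T.IsIndep I) {i j : ι}
    (hij : T.Adj i j) : Disjoint (palette 𝓘 x i) (palette 𝓘 x j) := by
  refine Finset.disjoint_left.mpr fun c hci hcj => ?_
  simp only [palette, Finset.mem_sigma, Finset.mem_filter] at hci hcj
  exact h𝓘 c.1 hci.1.1 hci.1.2 hcj.1.2 hij.ne hij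

end Palette

theorem colorable_of_covering_solution_general {V : Type*} (G : SimpleGraph V)
    (k : ℕ) (P : Fin k → Finset V)
    (hpart : ∀ v : V, ∃! i : Fin k, v ∈ P i)
    (hcliqueIndep : ∀ i : Fin k, G.IsClique ↑(P i) ∨ G.IsIndep ↑(P i))
    (hhom : ∀ i j : Fin k, i ≠ j →
      (∀ u ∈ P i, ∀ v ∈ P j, G.Adj u v) ∨ (∀ u ∈ P i, ∀ v ∈ P j, ¬ G.Adj u v))
    (x : Finset (Fin k) → ℕ)
    (hclq : ∀ i : Fin k, G.IsClique ↑(P i) →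
      (P i).card ≤ ∑ I ∈ (maxIndepSets (typeGraph G P)).filter (fun I => i ∈ I), x I)
    (hind : ∀ i : Fin k, G.IsIndep ↑(P i) →
      1 ≤ ∑ I ∈ (maxIndepSets (typeGraph G P)).filter (fun I => i ∈ I), x I) :
    G.Colorable (∑ I ∈ maxIndepSets (typeGraph G P), x I) := by
  set 𝓘 := maxIndepSets (typeGraph G P)
  choose p hp using fun v => (hpart v).exists
  choose f hfS hfadj using fun i => G.exists_mapsTo_adj_ne_of_isClique_or_isIndep
    (hcliqueIndep i) (S := palette 𝓘 x i) (by rw [card_palette]; exact hclq i)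
    (by rw [card_palette]; exact hind i)
  have hcard : (𝓘.sigma fun I => Finset.range (x I)).card = ∑ I ∈ 𝓘, x I := by simp
  rw [← hcard]
  refine G.colorable_card_of_forall_mem (fun v => f (p v) v)
    (fun v => palette_subset 𝓘 x _ (hfS _ (hp v))) fun u v huv => ?_
  by_cases hpuv : p u = p v
  · rw [hpuv]
    exact hfadj _ u (hpuv ▸ hp u) v (hp v) huv
  · have hT := typeGraph_adj_of_adj (hhom _ _ hpuv) hpuv (hp u) (hp v) huv
    exact Finset.disjoint_iff_ne.mp
      (disjoint_palette_of_adj 𝓘 x (fun _ => isIndep_of_mem_maxIndepSets) hT)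
      _ (hfS _ (hp u)) _ (hfS _ (hp v))

/-- Let `G` have an nd-decomposition `P_1, …, P_k` with type graph `T` and let `𝓘` be the
family of maximal independent sets of `T`.  If `x : 𝓘 → ℕ` satisfies the covering
constraints (`Σ_{I ∋ i} x I ≥ |P i|` for clique parts and `Σ_{I ∋ i} x I ≥ 1` for
independent-set parts), then `G` is colorable with `Σ_I x I` colors. -/
theorem colorable_of_covering_solution {V : Type*} [Fintype V] (G : SimpleGraph V)
    (k : ℕ) (P : Fin k → Finset V)
    (hpart : ∀ v : V, ∃! i : Fin k, v ∈ P i)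
    (hcliqueIndep : ∀ i : Fin k, G.IsClique ↑(P i) ∨ G.IsIndep ↑(P i))
    (hhom : ∀ i j : Fin k, i ≠ j →
      (∀ u ∈ P i, ∀ v ∈ P j, G.Adj u v) ∨ (∀ u ∈ P i, ∀ v ∈ P j, ¬ G.Adj u v))
    (x : Finset (Fin k) → ℕ)
    (hclq : ∀ i : Fin k, G.IsClique ↑(P i) →
      (P i).card ≤ ∑ I ∈ (maxIndepSets (typeGraph G P)).filter (fun I => i ∈ I), x I)
    (hind : ∀ i : Fin k, G.IsIndep ↑(P i) →
      1 ≤ ∑ I ∈ (maxIndepSets (typeGraph G P)).filter (fun I => i ∈ I), x I) :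
    G.Colorable (∑ I ∈ maxIndepSets (typeGraph G P), x I) :=
  colorable_of_covering_solution_general G k P hpart hcliqueIndep hhom x hclq hind
end

section
/- Let G be a finite simple graph with an nd-decomposition P_1, ..., P_k, let T be the associated type graph on {1, ..., k}, and let 𝓘 denote the family of maximal independent sets of T. If G admits a proper coloring with c colors, then there exists x : 𝓘 → ℕ with Σ_{I ∈ 𝓘} x(I) ≤ c such that for each i with P_i inducing a clique, Σ_{I ∈ 𝓘, i ∈ I} x(I) ≥ |P_i|, and for each i with P_i inducing a (nonempty) independent set, Σ_{I ∈ 𝓘, i ∈ I} x(I) ≥ 1. -/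
/-!
Colour `G` properly with `c` colours. The parts met by a colour class are pairwise non-adjacent in
the type graph, since adjacent parts are completely joined; extend this independent set of the
type graph to a maximal one and let `x I` count the colours whose chosen set is `I`. The colours
used on a clique part are distinct, so a clique part `P i` sees at least `|P i|` colours whose set
contains `i`, and a nonempty part sees at least one.
-/

open Finset

lemma mem_maxIndepSets_iff {k : ℕ} {T : SimpleGraph (Fin k)} {I : Finset (Fin k)} :
    I ∈ maxIndepSets T ↔ Maximal (fun J : Finset (Fin k) => T.IsIndep ↑J) I := by
  classical
  simp only [maxIndepSets, mem_filter, mem_univ, true_and, Maximal]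
  refine and_congr_right fun _ => forall_congr' fun J => imp_congr_right fun _ =>
    ⟨fun h hIJ => (h hIJ).ge, fun h hIJ => le_antisymm hIJ (h hIJ)⟩

lemma exists_mem_maxIndepSets_superset {k : ℕ} {T : SimpleGraph (Fin k)} {I : Finset (Fin k)}
    (hI : T.IsIndep ↑I) : ∃ M ∈ maxIndepSets T, I ⊆ M := by
  obtain ⟨M, hIM, hM⟩ :=
    Finite.exists_le_maximal (p := fun J : Finset (Fin k) => T.IsIndep ↑J) hI
  exact ⟨M, mem_maxIndepSets_iff.2 hM, hIM⟩

noncomputable def partsMeeting {V : Type*} {k : ℕ} (P : Fin k → Finset V) (s : Set V) :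
    Finset (Fin k) :=
  open Classical in {i | ∃ v ∈ P i, v ∈ s}

lemma mem_partsMeeting {V : Type*} {k : ℕ} {P : Fin k → Finset V} {s : Set V} {i : Fin k} :
    i ∈ partsMeeting P s ↔ ∃ v ∈ P i, v ∈ s := by
  simp [partsMeeting]

lemma isIndep_typeGraph_partsMeeting {V : Type*} {G : SimpleGraph V} {k : ℕ}
    (P : Fin k → Finset V) {s : Set V} (hs : G.IsIndep s) :
    (typeGraph G P).IsIndep ↑(partsMeeting P s) := by
  intro i hi j hj _ hadj
  obtain ⟨u, hu, hus⟩ := mem_partsMeeting.1 hi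
  obtain ⟨v, hv, hvs⟩ := mem_partsMeeting.1 hj
  exact hs hus hvs (G.ne_of_adj (hadj.2 u hu v hv)) (hadj.2 u hu v hv)

lemma SimpleGraph.Coloring.injOn_of_isClique {V α : Type*} {G : SimpleGraph V}
    (C : G.Coloring α) {s : Set V} (hs : G.IsClique s) : Set.InjOn C s :=
  fun _ hu _ hv huv => by_contra fun hne => C.valid (hs hu hv hne) huv

lemma sum_card_fiber_filter {ι β : Type*} [Fintype ι] [DecidableEq β] {f : ι → β}
    {t : Finset β} (hf : ∀ a, f a ∈ t) (p : β → Prop) [DecidablePred p] :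
    ∑ b ∈ t.filter p, #{a | f a = b} = #{a | p (f a)} := by
  rw [sum_card_fiberwise_eq_card_filter]
  simp only [mem_filter, hf, true_and]

theorem covering_solution_of_colorable_general {V : Type*} (G : SimpleGraph V)
    (k : ℕ) (P : Fin k → Finset V)
    (c : ℕ) (hc : G.Colorable c) :
    ∃ x : Finset (Fin k) → ℕ,
      (∑ I ∈ maxIndepSets (typeGraph G P), x I) ≤ c ∧
      (∀ i : Fin k, G.IsClique ↑(P i) →
        (P i).card ≤ ∑ I ∈ (maxIndepSets (typeGraph G P)).filter (fun I => i ∈ I), x I) ∧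
      (∀ i : Fin k, G.IsIndep ↑(P i) → (P i).Nonempty →
        1 ≤ ∑ I ∈ (maxIndepSets (typeGraph G P)).filter (fun I => i ∈ I), x I) := by
  classical
  obtain ⟨C⟩ := hc
  choose M hM hsub using fun t : Fin c => exists_mem_maxIndepSets_superset
    (isIndep_typeGraph_partsMeeting P (C.isIndepSet_colorClass t))
  have hcover : ∀ i, #((P i).image C) ≤ #{t | i ∈ M t} := fun i =>
    card_le_card fun t ht => by
      obtain ⟨v, hv, rfl⟩ := mem_image.1 ht
      exact mem_filter.2 ⟨mem_univ _, hsub _ (mem_partsMeeting.2 ⟨v, hv, C.mem_colorClass v⟩)⟩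
  refine ⟨fun I => #{t | M t = I}, ?_, fun i hi => ?_, fun i _ hne => ?_⟩
  · rw [← card_eq_sum_card_fiberwise fun t _ => hM t, card_univ, Fintype.card_fin]
  · rw [sum_card_fiber_filter hM, ← card_image_of_injOn (C.injOn_of_isClique hi)]
    exact hcover i
  · rw [sum_card_fiber_filter hM]
    exact (hne.image C).card_pos.trans_le (hcover i)

/-- Let `G` have an nd-decomposition `P_1, …, P_k` with type graph `T` and let `𝓘` be the
family of maximal independent sets of `T`.  If `G` admits a proper coloring with `c`
colors, then there is `x : 𝓘 → ℕ` with `Σ_I x I ≤ c` satisfying the covering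
constraints (`Σ_{I ∋ i} x I ≥ |P i|` for clique parts and `Σ_{I ∋ i} x I ≥ 1` for
nonempty independent-set parts). -/
theorem covering_solution_of_colorable {V : Type*} [Fintype V] (G : SimpleGraph V)
    (k : ℕ) (P : Fin k → Finset V)
    (hpart : ∀ v : V, ∃! i : Fin k, v ∈ P i)
    (hcliqueIndep : ∀ i : Fin k, G.IsClique ↑(P i) ∨ G.IsIndep ↑(P i))
    (hhom : ∀ i j : Fin k, i ≠ j →
      (∀ u ∈ P i, ∀ v ∈ P j, G.Adj u v) ∨ (∀ u ∈ P i, ∀ v ∈ P j, ¬ G.Adj u v))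
    (c : ℕ) (hc : G.Colorable c) :
    ∃ x : Finset (Fin k) → ℕ,
      (∑ I ∈ maxIndepSets (typeGraph G P), x I) ≤ c ∧
      (∀ i : Fin k, G.IsClique ↑(P i) →
        (P i).card ≤ ∑ I ∈ (maxIndepSets (typeGraph G P)).filter (fun I => i ∈ I), x I) ∧
      (∀ i : Fin k, G.IsIndep ↑(P i) → (P i).Nonempty →
        1 ≤ ∑ I ∈ (maxIndepSets (typeGraph G P)).filter (fun I => i ∈ I), x I) :=
  covering_solution_of_colorable_general G k P c hc
end

section
/- If G is a finite simple graph that contains no induced subgraph isomorphic to 4K_1 (four pairwise non-adjacent vertices), no induced cycle C_4, and no induced cycle C_6, and G contains an induced cycle C_7, then V(G) admits a k-uniform partition for some k with 7 ≤ k ≤ 13, i.e., a partition P_1, ..., P_k of V(G) such that each P_i induces a clique in G and for each pair i ≠ j, between P_i and P_j there are either all possible edges or no edges in G. -/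
/-- `G` contains an induced copy of `H`: there is a vertex-injection preserving both
adjacency and non-adjacency. -/
def HasInducedCopy {α V : Type*} (H : SimpleGraph α) (G : SimpleGraph V) : Prop :=
  ∃ f : α ↪ V, ∀ a b : α, H.Adj a b ↔ G.Adj (f a) (f b)

def cycB (a b : ℕ) : Bool := ((a+1) % 7 == b % 7) || ((b+1) % 7 == a % 7)

def pat1 (t : ℕ) (a b : Fin 8) : Bool :=
  if a.val < 7 then (if b.val < 7 then cycB a.val b.val else t.testBit a.val)
  else if b.val < 7 then t.testBit b.val else false

def pat2 (t s : ℕ) (e : Bool) (a b : Fin 9) : Bool :=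
  if a.val < 7 then
    (if b.val < 7 then cycB a.val b.val else if b.val = 7 then t.testBit a.val else s.testBit a.val)
  else if a.val = 7 then
    (if b.val < 7 then t.testBit b.val else if b.val = 7 then false else e)
  else
    (if b.val < 7 then s.testBit b.val else if b.val = 7 then e else false)

def patB (t s : ℕ) (a b : Fin 10) : Bool :=
  if a.val < 7 then
    (if b.val < 7 then cycB a.val b.val else if b.val ≤ 8 then t.testBit a.val else s.testBit a.val)
  else if b.val < 7 then
    (if a.val ≤ 8 then t.testBit b.val else s.testBit b.val)
  else
    decide (a.val = 7 ∧ b.val ≥ 8) || decide (b.val = 7 ∧ a.val ≥ 8)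

def wfn {n k : ℕ} [NeZero n] (l : List (Fin n)) : Fin k → Fin n := fun a => l.getD a.val 0

def hasWit {n k : ℕ} [NeZero n] (pat : Fin n → Fin n → Bool)
    (F : SimpleGraph (Fin k)) [DecidableRel F.Adj] (l : List (Fin n)) : Bool :=
  decide (Function.Injective (wfn (k := k) l)) &&
  decide (∀ a b : Fin k, F.Adj a b ↔ pat (wfn l a) (wfn l b) = true)

def entryOK {n : ℕ} [NeZero n] (pat : Fin n → Fin n → Bool) : ℕ × List (Fin n) → Bool
  | (0, l) => hasWit pat (⊥ : SimpleGraph (Fin 4)) l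
  | (1, l) => hasWit pat (SimpleGraph.cycleGraph 4) l
  | (_, l) => hasWit pat (SimpleGraph.cycleGraph 6) l

def typeMask : Fin 22 → ℕ := fun i => [67, 7, 14, 28, 56, 112, 97, 19, 25, 73, 38, 50, 76, 100, 31, 79, 103, 115, 121, 62, 124, 127].getD i.val 0

def tabA : List (ℕ × List (Fin 8)) := [(0, [0,2,4,7]), (0, [1,3,5,7]), (0, [0,2,4,7]), (0, [2,4,6,7]), (0, [0,3,5,7]), (0, [1,3,5,7]), (0, [0,3,5,7]), (0, []), (0, [0,2,4,7]), (0, [1,4,6,7]), (0, [0,2,4,7]), (0, [2,4,6,7]), (0, [1,4,6,7]), (0, [1,4,6,7]), (0, []), (2, [0,6,5,4,3,7]), (0, [0,2,5,7]), (0, [1,3,5,7]), (0, [0,2,5,7]), (0, []), (0, [0,3,5,7]), (0, [1,3,5,7]), (0, [0,3,5,7]), (1, [2,3,4,7]), (0, [0,2,5,7]), (0, []), (0, [0,2,5,7]), (1, [1,2,3,7]), (0, []), (1, [0,1,2,7]), (2, [0,1,7,4,5,6]), (0, []), (0, [0,2,4,7]), (0, [1,3,6,7]), (0, [0,2,4,7]),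 (0, [2,4,6,7]), (0, [1,3,6,7]), (0, [1,3,6,7]), (0, []), (1, [0,6,5,7]), (0, [0,2,4,7]), (0, [1,4,6,7]), (0, [0,2,4,7]), (0, [2,4,6,7]), (0, [1,4,6,7]), (0, [1,4,6,7]), (1, [3,4,5,7]), (1, [0,6,5,7]), (0, [1,3,6,7]), (0, [1,3,6,7]), (0, []), (1, [0,6,5,7]), (0, [1,3,6,7]), (0, [1,3,6,7]), (1, [2,3,4,7]), (1, [0,6,5,7]), (0, []), (1, [0,6,5,7]), (1, [1,2,3,7]), (1, [0,6,5,7]), (2, [0,1,2,7,5,6]), (1, [0,1,2,7]), (0, []), (1, [0,6,5,7]), (0, [0,2,4,7]), (0, [1,3,5,7]), (0, [0,2,4,7]), (0, []), (0, [0,3,5,7]), (0, [1,3,5,7]), (0, [0,3,5,7]), (2, [2,3,4,5,6,7]), (0, [0,2,4,7]), (0, []), (0, [0,2,4,7]), (1, [1,2,3,7]), (0, []), (1, [0,1,2,7]), (1, [0,1,7,6]), (0, []), (0, [0,2,5,7]), (0, [1,3,5,7]), (0, [0,2,5,7]), (1, [4,5,6,7]), (0, [0,3,5,7]), (0, [1,3,5,7]),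 (0, [0,3,5,7]), (1, [2,3,4,7]), (0, [0,2,5,7]), (1, [4,5,6,7]), (0, [0,2,5,7]), (1, [1,2,3,7]), (1, [4,5,6,7]), (1, [0,1,2,7]), (1, [0,1,7,6]), (1, [4,5,6,7]), (0, [0,2,4,7]), (0, []), (0, [0,2,4,7]), (2, [1,2,3,4,5,7]), (0, []), (1, [0,1,2,7]), (1, [0,1,7,6]), (0, []), (0, [0,2,4,7]), (1, [3,4,5,7]), (0, [0,2,4,7]), (1, [1,2,3,7]), (1, [3,4,5,7]), (1, [0,1,2,7]), (1, [0,1,7,6]), (1, [3,4,5,7]), (0, []), (2, [0,1,2,3,4,7]), (1, [0,1,7,6]), (0, []), (1, [2,3,4,7]), (1, [0,1,2,7]), (1, [0,1,7,6]), (1, [2,3,4,7]), (2, [0,1,2,3,7,6]), (0, []), (1, [0,1,7,6]), (1, [1,2,3,7]), (0, []), (1, [0,1,2,7]), (1, [0,1,7,6]), (0, [])]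

def tab2 : List (ℕ × List (Fin 9)) := [(0, [2,4,7,8]), (0, []), (0, [3,5,7,8]), (0, []), (0, []), (2, [3,4,5,6,7,8]), (0, []), (1, [1,2,8,7]), (0, []), (1, [5,6,7,8]), (0, []), (2, [1,2,3,4,8,7]), (0, [2,4,7,8]), (0, []), (0, [2,5,7,8]), (0, []), (0, [2,5,7,8]), (0, []), (0, [2,4,7,8]), (0, []), (0, []), (1, [5,6,7,8]), (0, []), (1, [5,6,7,8]), (0, []), (1, [1,2,8,7]), (0, []), (1, [1,2,8,7]), (2, [1,7,6,5,4,8]), (0, []), (1, [1,7,6,8]), (0, []), (1, [1,7,6,8]), (0, []), (1, [1,7,6,8]), (0, []), (2, [1,2,3,8,6,7]), (0, []), (0, []), (1, [5,6,7,8]), (0, []), (1, [1,2,8,7]), (1, [1,7,6,8]), (0, []), (0, [3,5,7,8]), (0, []), (0, [3,5,7,8]), (0, []), (0, [4,6,7,8]), (0, []), (0, []), (2, [0,6,5,4,8,7]), (0, []), (1, [2,3,8,7]), (0, []), (1, [0,6,8,7]), (0, []), (2, [2,3,4,5,8,7]), (0, [3,5,7,8]), (0, []), (0, []), (1, [2,3,8,7]),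 (0, []), (1, [2,3,8,7]), (0, [3,6,7,8]), (0, []), (0, [3,6,7,8]), (0, []), (0, []), (1, [0,6,8,7]), (0, []), (1, [0,6,8,7]), (1, [0,7,2,8]), (0, []), (1, [0,7,2,8]), (0, []), (1, [0,7,2,8]), (0, []), (2, [0,7,2,3,4,8]), (0, []), (0, []), (1, [2,3,8,7]), (2, [0,6,5,8,2,7]), (0, []), (0, []), (1, [0,6,8,7]), (1, [0,7,2,8]), (0, []), (0, []), (2, [3,4,5,6,8,7]), (0, [4,6,7,8]), (0, []), (0, [0,4,7,8]), (0, []), (0, [0,5,7,8]), (0, []), (0, []), (2, [0,1,7,8,5,6]), (0, []), (1, [3,4,8,7]), (0, []), (1, [0,1,7,8]), (0, []), (1, [3,4,8,7]), (0, []), (1, [0,1,7,8]), (0, []), (1, [0,1,7,8]), (0, [0,4,7,8]), (0, []), (0, []), (1, [3,4,8,7]), (0, [0,4,7,8]), (0, []), (0, [0,4,7,8]), (0, []), (1, [1,7,3,8]), (0, []), (1, [1,7,3,8]), (0, []), (2, [1,7,3,4,5,8]), (0, []), (0, []), (1, [3,4,8,7]), (0, []), (1, [0,1,7,8]), (1,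 [1,7,3,8]), (0, []), (2, [0,1,7,3,8,6]), (0, []), (1, [1,7,3,8]), (0, []), (0, []), (1, [1,2,7,8]), (0, []), (2, [0,6,5,4,7,8]), (0, [0,5,7,8]), (0, []), (0, [0,5,7,8]), (0, []), (0, [1,6,7,8]), (0, []), (0, []), (2, [0,1,2,7,8,6]), (0, []), (1, [4,5,8,7]), (0, []), (1, [1,2,7,8]), (0, [1,5,7,8]), (0, []), (0, [1,5,7,8]), (0, []), (0, []), (1, [4,5,8,7]), (0, []), (1, [1,2,7,8]), (0, [0,5,7,8]), (0, []), (0, []), (1, [4,5,8,7]), (1, [2,7,4,8]), (0, []), (2, [2,7,4,5,6,8]), (0, []), (0, []), (1, [4,5,8,7]), (0, []), (1, [1,2,7,8]), (2, [0,1,2,7,4,8]), (0, []), (1, [2,7,4,8]), (0, []), (1, [2,7,4,8]), (0, []), (1, [2,7,4,8]), (0, []), (0, []), (1, [5,6,8,7]), (0, []), (1, [2,3,7,8]), (0, []), (2, [0,1,8,7,5,6]), (0, [1,6,7,8]), (0, []), (0, [0,2,7,8]), (0, []), (0, [0,2,7,8]), (0, []), (0, []), (2, [0,1,2,3,7,8]),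 (0, [2,6,7,8]), (0, []), (0, [1,6,7,8]), (0, []), (0, []), (1, [5,6,8,7]), (0, []), (1, [2,3,7,8]), (0, [0,2,7,8]), (0, []), (0, []), (1, [5,6,8,7]), (0, []), (1, [2,3,7,8]), (2, [0,6,5,7,3,8]), (0, []), (0, []), (1, [5,6,8,7]), (0, []), (1, [2,3,7,8]), (2, [1,2,3,7,5,8]), (0, []), (1, [3,7,5,8]), (0, []), (1, [3,7,5,8]), (0, []), (1, [3,7,5,8]), (0, []), (1, [3,7,5,8]), (0, []), (0, []), (2, [1,2,3,4,7,8]), (0, []), (1, [0,6,7,8]), (0, []), (1, [3,4,7,8]), (0, []), (2, [0,1,2,8,7,6]), (0, [0,2,7,8]), (0, []), (0, [0,2,7,8]), (0, []), (0, [1,3,7,8]), (0, []), (0, []), (1, [0,6,7,8]), (0, []), (1, [0,6,7,8]), (0, []), (1, [3,4,7,8]), (0, [0,3,7,8]), (0, []), (0, [0,2,7,8]), (0, []), (0, []), (1, [3,4,7,8]), (0, [0,3,7,8]), (0, []), (0, []), (1, [0,6,7,8]), (0, []), (1, [3,4,7,8]), (2, [2,3,4,7,6,8]), (0, []), (1,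 [4,7,6,8]), (0, []), (1, [4,7,6,8]), (0, []), (2, [0,1,8,4,7,6]), (0, []), (1, [4,7,6,8]), (0, []), (1, [4,7,6,8]), (0, []), (0, [2,4,7,8]), (0, []), (0, []), (2, [2,3,4,5,7,8]), (0, []), (1, [0,1,8,7]), (0, []), (1, [4,5,7,8]), (0, []), (2, [0,1,2,3,8,7]), (0, [1,3,7,8]), (0, []), (0, [1,3,7,8]), (0, []), (0, []), (1, [4,5,7,8]), (0, []), (1, [4,5,7,8]), (0, [1,4,7,8]), (0, []), (0, []), (1, [0,1,8,7]), (0, []), (1, [0,1,8,7]), (0, [1,4,7,8]), (0, []), (0, [1,3,7,8]), (0, []), (0, []), (1, [4,5,7,8]), (2, [0,7,5,4,3,8]), (0, []), (1, [0,7,5,8]), (0, []), (1, [0,7,5,8]), (0, []), (1, [0,7,5,8]), (0, []), (0, []), (1, [0,1,8,7]), (2, [0,1,2,8,5,7]), (0, []), (1, [0,7,5,8]), (0, []), (0, []), (0, []), (0, []), (0, []), (0, []), (0, []), (0, []), (0, []), (0, []), (0, []), (0, []), (0, []), (0, []), (0, []), (0, [2,5,7,8]), (0, []), (0, []), (0,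 []), (0, [2,5,7,8]), (1, [3,4,7,8]), (0, [3,6,7,8]), (1, [4,5,8,7]), (0, []), (0, []), (2, [0,6,8,3,4,7]), (1, [0,6,8,7]), (2, [1,2,8,5,4,7]), (1, [0,6,8,7]), (0, []), (0, []), (2, [1,7,4,5,6,8]), (1, [3,4,7,8]), (2, [0,7,4,3,2,8]), (1, [4,5,8,7]), (0, []), (0, []), (0, []), (0, []), (0, []), (0, []), (0, []), (0, []), (0, []), (0, []), (0, []), (0, []), (0, []), (0, []), (0, []), (0, []), (0, []), (0, []), (0, []), (0, []), (0, []), (0, []), (0, []), (0, []), (0, []), (0, []), (0, [1,5,7,8]), (0, []), (0, []), (0, []), (2, [0,1,8,5,4,7]), (1, [0,1,8,7]), (0, [2,6,7,8]), (1, [0,1,8,7]), (0, [1,5,7,8]), (1, [0,6,8,7]), (2, [0,6,8,2,3,7]), (1, [0,6,8,7]), (0, []), (0, []), (0, []), (0, []), (0, []), (0, []), (0, []), (0, []), (0, []), (0, []), (2, [0,6,5,8,3,7]), (1, [0,1,8,7]), (2, [0,1,2,8,4,7]), (1, [0,6,8,7]), (0, []), (0, []), (0, []), (0, []), (0, []),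 (0, []), (0, []), (0, []), (0, []), (0, []), (0, []), (0, []), (0, []), (0, []), (0, []), (0, []), (0, []), (0, []), (0, []), (0, []), (0, [1,4,7,8]), (0, []), (2, [2,3,7,6,5,8]), (1, [0,1,8,7]), (2, [0,1,8,4,3,7]), (1, [0,1,8,7]), (0, []), (0, []), (0, [1,4,7,8]), (1, [2,3,7,8]), (0, []), (0, []), (0, []), (0, []), (2, [0,7,3,4,5,8]), (1, [2,3,7,8]), (2, [1,2,3,7,6,8]), (1, [3,4,8,7]), (0, []), (0, []), (0, []), (0, []), (0, []), (0, []), (0, []), (0, []), (0, []), (0, []), (0, []), (0, []), (0, []), (0, []), (0, []), (0, []), (0, []), (0, []), (0, []), (0, []), (0, []), (0, []), (0, []), (0, []), (0, []), (0, []), (0, []), (0, []), (0, [0,3,7,8]), (0, []), (0, []), (0, []), (0, [0,4,7,8]), (1, [5,6,8,7]), (0, []), (0, []), (2, [0,6,5,7,2,8]), (1, [4,5,7,8]), (2, [1,7,5,4,3,8]), (1, [5,6,8,7]), (0, []), (0, []), (0, []), (0, []), (0, []), (0, []), (0, []), (0, []), (0, []), (0, []), (0, []), (0, []), (0, []), (0,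 []), (0, []), (0, []), (0, []), (0, []), (0, []), (0, []), (0, []), (0, []), (0, []), (0, []), (0, []), (0, []), (0, []), (0, []), (0, []), (0, []), (0, []), (0, []), (0, []), (0, []), (0, [0,2,7,8]), (0, []), (2, [1,2,8,6,5,7]), (1, [1,2,8,7]), (0, [0,3,7,8]), (1, [1,2,8,7]), (0, []), (0, []), (0, []), (0, []), (0, []), (0, []), (0, []), (0, []), (2, [1,2,3,8,5,7]), (1, [0,1,7,8]), (0, []), (0, []), (2, [0,1,7,4,8,6]), (1, [1,2,8,7]), (0, []), (0, []), (0, []), (0, []), (0, []), (0, []), (0, []), (0, []), (0, []), (0, []), (0, []), (0, []), (0, []), (0, []), (0, []), (0, []), (0, []), (0, []), (0, []), (0, []), (0, []), (0, []), (0, []), (0, []), (0, []), (0, []), (0, [0,4,7,8]), (0, []), (0, []), (0, []), (2, [2,7,6,5,4,8]), (1, [0,6,7,8]), (0, []), (0, []), (0, []), (0, []), (0, []), (0, []), (0, []), (0, []), (2, [0,1,8,3,7,6]), (1, [5,6,7,8]), (0, []), (0, []), (0, []), (0, []), (0, []), (0, []), (0, []), (0, []), (0, []), (0, []), (0, []),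 (0, []), (0, []), (0, []), (0, []), (0, []), (0, []), (0, []), (0, []), (0, []), (0, []), (0, []), (0, []), (0, []), (0, []), (0, []), (0, []), (0, []), (0, []), (0, []), (0, [0,3,7,8]), (0, []), (0, []), (0, []), (0, []), (0, []), (0, []), (0, []), (2, [2,3,4,8,6,7]), (1, [1,2,7,8]), (2, [0,1,2,7,5,8]), (1, [2,3,8,7]), (0, []), (0, []), (0, []), (0, []), (0, []), (0, []), (0, []), (0, []), (0, []), (0, []), (0, []), (0, []), (0, []), (0, []), (0, []), (0, []), (0, []), (0, []), (0, []), (0, []), (0, []), (0, []), (0, []), (0, []), (0, []), (0, []), (0, []), (0, []), (0, []), (0, []), (0, []), (0, []), (0, []), (0, []), (1, [0,7,2,8]), (0, []), (0, []), (0, []), (1, [0,7,2,8]), (1, [4,5,8,7]), (0, []), (0, []), (0, []), (0, []), (0, []), (0, []), (1, [2,7,4,8]), (1, [0,6,8,7]), (0, []), (0, []), (0, []), (0, []), (0, []), (0, []), (0, []), (0, []), (0, []), (0, []), (0, []), (0, []), (0, []), (0, []), (0, []), (0, []), (0, []), (0, []), (0, []), (0, []), (0, []), (0, []), (0, []), (0,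 []), (0, []), (0, []), (0, []), (0, []), (0, []), (0, []), (0, []), (0, []), (1, [0,7,2,8]), (0, []), (0, []), (0, []), (1, [1,7,6,8]), (1, [3,4,8,7]), (0, []), (0, []), (1, [1,7,3,8]), (1, [5,6,7,8]), (0, []), (0, []), (0, []), (0, []), (0, []), (0, []), (0, []), (0, []), (0, []), (0, []), (0, []), (0, []), (0, []), (0, []), (0, []), (0, []), (0, []), (0, []), (0, []), (0, []), (0, []), (0, []), (0, []), (0, []), (0, []), (0, []), (0, []), (0, []), (0, []), (0, []), (0, []), (0, []), (0, []), (0, []), (0, []), (0, []), (1, [0,7,2,8]), (0, []), (0, []), (0, []), (1, [0,7,5,8]), (1, [2,3,8,7]), (0, []), (0, []), (0, []), (0, []), (0, []), (0, []), (0, []), (0, []), (0, []), (0, []), (0, []), (0, []), (0, []), (0, []), (0, []), (0, []), (0, []), (0, []), (0, []), (0, []), (0, []), (0, []), (0, []), (0, []), (0, []), (0, []), (0, []), (0, []), (0, []), (0, []), (0, []), (0, []), (0, []), (0, []), (0, []), (0, []), (0, []), (0, []), (0, []), (0, []), (1, [0,7,4,8]), (0, []), (0, []), (0, []), (0, []),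 (0, []), (1, [4,7,6,8]), (1, [1,2,8,7]), (0, []), (0, []), (0, []), (0, []), (0, []), (0, []), (0, []), (0, []), (0, []), (0, []), (0, []), (0, []), (0, []), (0, []), (0, []), (0, []), (0, []), (0, []), (0, []), (0, []), (0, []), (0, []), (0, []), (0, []), (0, []), (0, []), (0, []), (0, []), (0, []), (0, []), (0, []), (0, []), (0, []), (0, []), (0, []), (0, []), (0, []), (0, []), (1, [0,7,3,8]), (0, []), (1, [3,7,5,8]), (1, [0,1,8,7]), (0, []), (0, []), (0, []), (0, []), (0, []), (0, []), (0, []), (0, []), (0, []), (0, []), (0, []), (0, []), (0, []), (0, []), (0, []), (0, []), (0, []), (0, []), (0, []), (0, []), (0, []), (0, []), (0, []), (0, []), (0, []), (0, []), (0, []), (0, []), (0, []), (0, []), (0, []), (0, []), (0, []), (0, []), (0, []), (0, []), (0, []), (0, []), (0, []), (0, []), (0, []), (0, []), (1, [1,7,3,8]), (0, []), (0, []), (0, []), (0, []), (0, []), (0, []), (0, []), (0, []), (0, []), (0, []), (0, []), (0, []), (0, []), (0, []), (0, []), (0, []), (0, []), (0, []), (0, []), (0, []), (0, []), (0, []), (0,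 []), (0, []), (0, []), (0, []), (0, []), (0, []), (0, []), (0, []), (0, []), (0, []), (0, []), (0, []), (0, []), (0, []), (0, []), (0, []), (0, []), (0, []), (0, []), (0, []), (0, []), (0, []), (0, []), (1, [2,7,4,8]), (0, []), (0, []), (0, []), (0, []), (0, []), (0, []), (0, []), (0, []), (0, []), (0, []), (0, []), (0, []), (0, []), (0, []), (0, []), (0, []), (0, []), (0, []), (0, []), (0, []), (0, []), (0, []), (0, []), (0, []), (0, []), (0, []), (0, []), (0, []), (0, []), (0, []), (0, []), (0, []), (0, []), (0, []), (0, []), (0, []), (0, []), (0, []), (0, []), (0, []), (0, []), (0, []), (0, []), (0, []), (0, []), (1, [0,7,2,8]), (0, [])]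

def tabB : List (ℕ × List (Fin 10)) := [(0, [2,4,8,9]), (0, [3,5,8,9]), (2, [3,4,5,6,7,9]), (1, [1,2,9,7]), (1, [5,6,7,9]), (2, [1,2,3,4,9,7]), (0, [2,4,8,9]), (0, [2,5,8,9]), (0, [2,5,8,9]), (0, [2,4,8,9]), (1, [5,6,7,9]), (1, [5,6,7,9]), (1, [1,2,9,7]), (1, [1,2,9,7]), (2, [1,8,6,5,4,9]), (1, [1,8,6,9]), (1, [1,8,6,9]), (1, [1,8,6,9]), (2, [1,2,3,9,6,8]), (1, [5,6,7,9]), (1, [1,2,9,7]), (1, [1,8,6,9]), (0, [3,5,8,9]), (0, [3,5,8,9]), (0, [4,6,8,9]), (2, [0,6,5,4,9,7]), (1, [2,3,9,7]), (1, [0,6,9,7]), (2, [2,3,4,5,9,7]), (0, [3,5,8,9]), (1, [2,3,9,7]), (1, [2,3,9,7]), (0, [3,6,8,9]), (0, [3,6,8,9]), (1, [0,6,9,7]), (1, [0,6,9,7]), (1, [0,8,2,9]), (1, [0,8,2,9]), (1, [0,8,2,9]), (2, [0,8,2,3,4,9]), (1, [2,3,9,7]), (2, [0,6,5,9,2,8]),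 (1, [0,6,9,7]), (1, [0,8,2,9]), (2, [3,4,5,6,9,7]), (0, [4,6,8,9]), (0, [0,4,8,9]), (0, [0,5,8,9]), (2, [0,1,7,9,5,6]), (1, [3,4,9,7]), (1, [0,1,7,9]), (1, [3,4,9,7]), (1, [0,1,7,9]), (1, [0,1,7,9]), (0, [0,4,8,9]), (1, [3,4,9,7]), (0, [0,4,8,9]), (0, [0,4,8,9]), (1, [1,8,3,9]), (1, [1,8,3,9]), (2, [1,8,3,4,5,9]), (1, [3,4,9,7]), (1, [0,1,7,9]), (1, [1,8,3,9]), (2, [0,1,8,3,9,6]), (1, [1,8,3,9]), (1, [1,2,7,9]), (2, [0,6,5,4,7,9]), (0, [0,5,8,9]), (0, [0,5,8,9]), (0, [1,6,8,9]), (2, [0,1,2,7,9,6]), (1, [4,5,9,7]), (1, [1,2,7,9]), (0, [1,5,8,9]), (0, [1,5,8,9]), (1, [4,5,9,7]), (1, [1,2,7,9]), (0, [0,5,8,9]), (1, [4,5,9,7]), (1, [2,8,4,9]), (2, [2,8,4,5,6,9]), (1, [4,5,9,7]), (1, [1,2,7,9]), (2, [0,1,2,8,4,9]), (1, [2,8,4,9]),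 (1, [2,8,4,9]), (1, [2,8,4,9]), (1, [5,6,9,7]), (1, [2,3,7,9]), (2, [0,1,9,7,5,6]), (0, [1,6,8,9]), (0, [0,2,8,9]), (0, [0,2,8,9]), (2, [0,1,2,3,7,9]), (0, [2,6,8,9]), (0, [1,6,8,9]), (1, [5,6,9,7]), (1, [2,3,7,9]), (0, [0,2,8,9]), (1, [5,6,9,7]), (1, [2,3,7,9]), (2, [0,6,5,8,3,9]), (1, [5,6,9,7]), (1, [2,3,7,9]), (2, [1,2,3,8,5,9]), (1, [3,8,5,9]), (1, [3,8,5,9]), (1, [3,8,5,9]), (1, [3,8,5,9]), (2, [1,2,3,4,7,9]), (1, [0,6,7,9]), (1, [3,4,7,9]), (2, [0,1,2,9,7,6]), (0, [0,2,8,9]), (0, [0,2,8,9]), (0, [1,3,8,9]), (1, [0,6,7,9]), (1, [0,6,7,9]), (1, [3,4,7,9]), (0, [0,3,8,9]), (0, [0,2,8,9]), (1, [3,4,7,9]), (0, [0,3,8,9]), (1, [0,6,7,9]), (1, [3,4,7,9]), (2, [2,3,4,8,6,9]), (1, [4,8,6,9]), (1, [4,8,6,9]), (2, [0,1,9,4,8,6]),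 (1, [4,8,6,9]), (1, [4,8,6,9]), (0, [2,4,8,9]), (2, [2,3,4,5,7,9]), (1, [0,1,9,7]), (1, [4,5,7,9]), (2, [0,1,2,3,9,7]), (0, [1,3,8,9]), (0, [1,3,8,9]), (1, [4,5,7,9]), (1, [4,5,7,9]), (0, [1,4,8,9]), (1, [0,1,9,7]), (1, [0,1,9,7]), (0, [1,4,8,9]), (0, [1,3,8,9]), (1, [4,5,7,9]), (2, [0,8,5,4,3,9]), (1, [0,8,5,9]), (1, [0,8,5,9]), (1, [0,8,5,9]), (1, [0,1,9,7]), (2, [0,1,2,9,5,8]), (1, [0,8,5,9]), (0, [2,5,8,9]), (0, [3,5,8,9]), (1, [3,4,7,9]), (1, [1,2,9,7]), (0, [2,6,8,9]), (1, [0,6,9,7]), (1, [4,5,9,7]), (0, [2,5,8,9]), (0, [2,5,8,9]), (0, [2,5,8,9]), (0, [3,6,8,9]), (0, [2,6,8,9]), (1, [0,6,9,7]), (1, [0,6,9,7]), (1, [0,8,4,9]), (1, [3,4,7,9]), (1, [4,5,9,7]), (1, [0,8,4,9]), (1, [0,8,4,9]), (1, [1,8,4,9]), (1, [0,6,9,7]),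 (1, [0,8,4,9]), (0, [2,5,8,9]), (1, [2,3,7,9]), (1, [0,1,9,7]), (0, [1,5,8,9]), (0, [1,6,8,9]), (1, [0,6,9,7]), (1, [4,5,9,7]), (0, [2,5,8,9]), (0, [1,5,8,9]), (0, [1,5,8,9]), (1, [0,1,9,7]), (0, [2,6,8,9]), (0, [1,5,8,9]), (1, [0,6,9,7]), (1, [0,8,3,9]), (1, [0,8,3,9]), (1, [2,3,7,9]), (1, [0,8,4,9]), (1, [0,8,3,9]), (1, [0,1,9,7]), (1, [0,6,9,7]), (1, [0,8,3,9]), (0, [2,4,8,9]), (1, [2,3,7,9]), (1, [0,1,9,7]), (0, [1,5,8,9]), (1, [5,6,7,9]), (1, [3,4,9,7]), (0, [1,4,8,9]), (0, [2,5,8,9]), (0, [1,5,8,9]), (0, [1,4,8,9]), (1, [0,1,9,7]), (1, [0,1,9,7]), (0, [1,4,8,9]), (0, [1,4,8,9]), (1, [0,8,3,9]), (1, [0,8,3,9]), (1, [2,3,7,9]), (1, [3,4,9,7]), (1, [0,8,3,9]), (1, [0,1,9,7]), (1, [3,8,6,9]), (1, [0,8,3,9]), (1, [5,6,9,7]), (0,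 [3,6,8,9]), (0, [0,4,8,9]), (1, [4,5,7,9]), (1, [2,3,9,7]), (0, [0,3,8,9]), (1, [0,1,7,9]), (0, [3,6,8,9]), (1, [0,1,7,9]), (1, [0,1,7,9]), (0, [0,3,8,9]), (0, [0,3,8,9]), (0, [0,4,8,9]), (0, [0,3,8,9]), (1, [4,5,7,9]), (1, [5,6,9,7]), (1, [1,8,5,9]), (1, [1,8,5,9]), (1, [0,1,7,9]), (1, [1,8,5,9]), (1, [2,8,5,9]), (1, [1,8,5,9]), (1, [5,6,9,7]), (0, [3,6,8,9]), (1, [3,4,7,9]), (1, [1,2,9,7]), (0, [0,2,8,9]), (0, [0,2,8,9]), (1, [0,1,7,9]), (0, [2,6,8,9]), (0, [2,6,8,9]), (1, [0,1,7,9]), (0, [0,3,8,9]), (0, [0,2,8,9]), (1, [1,2,9,7]), (0, [0,3,8,9]), (1, [1,8,4,9]), (1, [3,4,7,9]), (1, [1,8,5,9]), (1, [1,8,4,9]), (1, [0,1,7,9]), (1, [1,8,4,9]), (1, [1,2,9,7]), (1, [1,8,4,9]), (1, [1,2,7,9]), (1, [0,6,7,9]), (0, [0,4,8,9]), (0, [0,5,8,9]),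 (1, [5,6,7,9]), (1, [3,4,9,7]), (0, [1,4,8,9]), (1, [0,6,7,9]), (0, [1,5,8,9]), (0, [1,4,8,9]), (0, [0,4,8,9]), (1, [1,2,7,9]), (0, [0,4,8,9]), (0, [0,4,8,9]), (1, [0,6,7,9]), (1, [2,8,6,9]), (1, [2,8,6,9]), (1, [1,2,7,9]), (1, [3,8,6,9]), (1, [5,6,7,9]), (1, [2,8,6,9]), (1, [2,8,6,9]), (1, [1,2,7,9]), (1, [0,6,7,9]), (0, [0,4,8,9]), (1, [4,5,7,9]), (1, [2,3,9,7]), (0, [0,3,8,9]), (0, [1,3,8,9]), (1, [0,6,7,9]), (1, [0,6,7,9]), (0, [1,4,8,9]), (0, [0,3,8,9]), (0, [0,3,8,9]), (0, [0,4,8,9]), (0, [0,3,8,9]), (1, [0,6,7,9]), (1, [2,8,6,9]), (1, [2,8,5,9]), (1, [1,2,7,9]), (1, [2,3,9,7]), (1, [2,8,5,9]), (1, [2,8,5,9]), (1, [2,8,5,9]), (2, [1,8,4,5,6,9]), (1, [0,8,2,9]), (1, [1,8,3,9]), (1, [2,8,4,9]), (2, [0,6,5,9,3,8]), (1, [0,6,9,7]),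 (1, [4,5,9,7]), (1, [0,8,4,9]), (1, [0,8,3,9]), (1, [0,8,3,9]), (1, [4,5,9,7]), (1, [1,8,4,9]), (1, [0,6,9,7]), (1, [0,6,9,7]), (1, [0,8,2,9]), (1, [0,8,2,9]), (1, [0,8,2,9]), (1, [0,8,4,9]), (1, [0,8,3,9]), (1, [1,8,3,9]), (1, [0,6,9,7]), (1, [0,8,2,9]), (1, [1,8,6,9]), (1, [0,8,2,9]), (1, [1,8,3,9]), (2, [2,8,6,5,4,9]), (1, [5,6,7,9]), (1, [3,4,9,7]), (2, [0,8,3,4,5,9]), (1, [3,4,9,7]), (1, [0,8,3,9]), (1, [0,8,3,9]), (1, [5,6,7,9]), (1, [3,4,9,7]), (1, [2,8,6,9]), (1, [2,8,6,9]), (1, [0,8,2,9]), (1, [0,8,2,9]), (1, [0,8,2,9]), (1, [1,8,6,9]), (1, [0,8,3,9]), (1, [1,8,3,9]), (1, [2,8,6,9]), (1, [0,8,2,9]), (1, [1,8,6,9]), (1, [0,8,2,9]), (2, [1,8,5,4,3,9]), (1, [4,5,7,9]), (1, [2,3,9,7]), (2, [2,3,4,9,6,8]), (1, [0,8,5,9]),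 (1, [4,5,7,9]), (1, [2,3,9,7]), (1, [2,3,9,7]), (1, [1,8,5,9]), (1, [1,8,5,9]), (1, [2,8,6,9]), (1, [2,8,5,9]), (1, [0,8,2,9]), (1, [0,8,2,9]), (1, [0,8,2,9]), (1, [0,8,5,9]), (1, [0,8,5,9]), (1, [1,8,5,9]), (1, [2,8,5,9]), (1, [0,8,2,9]), (1, [1,8,6,9]), (2, [0,8,4,3,2,9]), (1, [3,4,7,9]), (1, [1,2,9,7]), (2, [1,2,3,9,5,8]), (1, [4,8,6,9]), (1, [0,8,5,9]), (1, [0,8,4,9]), (1, [0,8,4,9]), (1, [3,4,7,9]), (1, [1,8,5,9]), (1, [1,8,4,9]), (1, [1,2,9,7]), (1, [1,2,9,7]), (1, [0,8,4,9]), (1, [1,8,6,9]), (1, [0,8,5,9]), (1, [0,8,4,9]), (1, [0,8,4,9]), (1, [1,8,4,9]), (1, [1,2,9,7]), (1, [0,8,4,9]), (2, [1,2,3,8,6,9]), (1, [2,3,7,9]), (1, [0,1,9,7]), (2, [0,1,2,9,4,8]), (1, [3,8,5,9]), (1, [4,8,6,9]), (1, [0,8,5,9]), (1, [0,8,4,9]),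 (1, [0,8,3,9]), (1, [0,8,3,9]), (1, [0,1,9,7]), (1, [0,1,9,7]), (1, [3,8,6,9]), (1, [2,3,7,9]), (1, [0,8,3,9]), (1, [0,8,3,9]), (1, [0,8,5,9]), (1, [0,8,4,9]), (1, [0,8,3,9]), (1, [0,1,9,7]), (1, [3,8,5,9]), (1, [0,8,3,9]), (1, [5,6,9,7]), (2, [0,6,5,8,2,9]), (1, [1,8,3,9]), (1, [2,8,4,9]), (1, [3,8,5,9]), (2, [0,1,8,4,9,6]), (1, [0,1,7,9]), (1, [1,8,4,9]), (1, [0,1,7,9]), (1, [0,1,7,9]), (1, [1,8,5,9]), (1, [1,8,4,9]), (1, [5,6,9,7]), (1, [2,8,5,9]), (1, [1,8,3,9]), (1, [1,8,3,9]), (1, [1,8,5,9]), (1, [1,8,4,9]), (1, [0,1,7,9]), (1, [1,8,3,9]), (1, [2,8,4,9]), (1, [1,8,3,9]), (1, [1,2,7,9]), (1, [0,6,7,9]), (2, [0,1,9,3,8,6]), (1, [2,8,4,9]), (1, [3,8,5,9]), (1, [4,8,6,9]), (2, [0,1,2,8,5,9]), (1, [0,6,7,9]), (1, [0,6,7,9]),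 (1, [3,8,6,9]), (1, [2,8,5,9]), (1, [1,2,7,9]), (1, [2,8,6,9]), (1, [2,8,5,9]), (1, [0,6,7,9]), (1, [2,8,6,9]), (1, [2,8,5,9]), (1, [1,2,7,9]), (1, [3,8,5,9]), (1, [2,8,4,9]), (1, [2,8,4,9]), (1, [2,8,4,9]), (1, [1,8,6,9]), (1, [0,8,2,9]), (1, [1,8,3,9]), (1, [2,8,4,9]), (1, [3,8,5,9]), (1, [4,8,6,9]), (1, [0,8,5,9]), (1, [0,8,4,9]), (1, [0,8,3,9]), (1, [0,8,3,9]), (1, [1,8,5,9]), (1, [1,8,4,9]), (1, [2,8,6,9]), (1, [2,8,5,9]), (1, [0,8,2,9]), (1, [0,8,2,9]), (1, [0,8,2,9]), (1, [0,8,4,9]), (1, [0,8,3,9]), (1, [1,8,3,9]), (1, [2,8,4,9]), (1, [0,8,2,9])]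

def incompList : List (ℕ × ℕ) := [(7,9),(7,10),(7,12),(7,13),(7,15),(7,16),(8,10),(8,11),(8,12),(8,13),(8,19),(8,20),(9,10),(9,11),(9,13),(9,16),(9,17),(10,12),(10,14),(10,15),(11,12),(11,13),(11,18),(11,20),(12,14),(12,19),(13,17),(13,18),(14,16),(14,20),(15,17),(15,19),(16,18),(17,20),(18,19)]

def incompB (i j : Fin 22) : Bool := incompList.contains (i.val, j.val)

def need2 (i j : Fin 22) (e : Bool) : Bool := decide (i = j) && !e || decide (i.val < 7) && (e != (typeMask j).testBit i.val) || incompB i j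


def allowedMask (m : ℕ) : Bool := (List.range 22).any fun i => typeMask ⟨i % 22, Nat.mod_lt _ (by norm_num)⟩ == m

lemma checkA : ∀ m : Fin 128,
    (allowedMask m.val || entryOK (pat1 m.val) (tabA.getD m.val (0, []))) = true := by decide

set_option maxRecDepth 40000 in
lemma checkB : ∀ i j : Fin 22,
    entryOK (patB (typeMask i) (typeMask j)) (tabB.getD (i.val * 22 + j.val) (0, [])) = true := by decide

set_option maxRecDepth 40000 in
lemma check2 : ∀ i j : Fin 22, ∀ e : Bool, need2 i j e = true →
    entryOK (pat2 (typeMask i) (typeMask j) e) (tab2.getD (i.val * 44 + j.val * 2 + e.toNat) (0, [])) = true := by decide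


section Machinery

lemma entryOK_spec {n : ℕ} [NeZero n] {pat : Fin n → Fin n → Bool} {e : ℕ × List (Fin n)}
    (he : entryOK pat e = true) {V : Type*} {G : SimpleGraph V} (m : Fin n → V)
    (hm : Function.Injective m) (hadj : ∀ a b, pat a b = true ↔ G.Adj (m a) (m b)) :
    HasInducedCopy (⊥ : SimpleGraph (Fin 4)) G ∨ HasInducedCopy (SimpleGraph.cycleGraph 4) G ∨
      HasInducedCopy (SimpleGraph.cycleGraph 6) G := by
  obtain ⟨tag, l⟩ := e
  have key : ∀ (k : ℕ) (F : SimpleGraph (Fin k)) (inst : DecidableRel F.Adj),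
      hasWit pat F l = true → HasInducedCopy F G := by
    intro k F inst h
    rw [hasWit, Bool.and_eq_true] at h
    have h1 := of_decide_eq_true h.1
    have h2 := of_decide_eq_true h.2
    exact ⟨⟨m ∘ wfn l, hm.comp h1⟩, fun a b => (h2 a b).trans (hadj _ _)⟩
  match tag with
  | 0 => exact Or.inl (key _ _ _ he)
  | 1 => exact Or.inr (Or.inl (key _ _ _ he))
  | (t+2) => exact Or.inr (Or.inr (key _ _ _ he))

def vmap {V : Type*} {n : ℕ} (c : Fin 7 → V) (o : List V) (a : Fin n) : V :=
  if h : a.val < 7 then c ⟨a.val, h⟩ else o.getD (a.val - 7) (c 0)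

lemma vmap_in {V : Type*} {n : ℕ} (c : Fin 7 → V) (o : List V) (a : Fin n) (h : a.val < 7) :
    vmap c o a = c ⟨a.val, h⟩ := dif_pos h

lemma vmap_out {V : Type*} {n : ℕ} (c : Fin 7 → V) (o : List V) (a : Fin n) (h : ¬ a.val < 7) :
    vmap c o a = o.getD (a.val - 7) (c 0) := dif_neg h

lemma vmap_inj {V : Type*} {n r : ℕ} (hn : n = 7 + r) (c : Fin 7 → V) (o : List V)
    (hr : o.length = r) (hc : Function.Injective c) (ho : o.Nodup)
    (hdisj : ∀ v ∈ o, ∀ a, v ≠ c a) : Function.Injective (vmap (n := n) c o) := by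
  intro a b hab
  unfold vmap at hab
  split at hab <;> split at hab
  · next h1 h2 =>
      have := hc hab
      exact Fin.ext (by simpa [Fin.ext_iff] using this)
  · next h1 h2 =>
      exfalso
      have hb : b.val - 7 < o.length := by omega
      rw [List.getD_eq_getElem o _ hb] at hab
      exact hdisj _ (List.getElem_mem hb) _ hab.symm
  · next h1 h2 =>
      exfalso
      have ha : a.val - 7 < o.length := by omega
      rw [List.getD_eq_getElem o _ ha] at hab
      exact hdisj _ (List.getElem_mem ha) _ hab
  · next h1 h2 =>
      have ha : a.val - 7 < o.length := by omega
      have hb : b.val - 7 < o.length := by omega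
      rw [List.getD_eq_getElem o _ ha, List.getD_eq_getElem o _ hb] at hab
      have := (List.Nodup.getElem_inj_iff ho).mp hab
      exact Fin.ext (by omega)

end Machinery


section Hadj

variable {V : Type*} {G : SimpleGraph V} {c : Fin 7 → V} {x y z : V} {t s : ℕ}

lemma hadj1 (hc : ∀ a b : Fin 7, cycB a.val b.val = true ↔ G.Adj (c a) (c b))
    (hx : ∀ a : Fin 7, t.testBit a.val = true ↔ G.Adj x (c a)) :
    ∀ a b : Fin 8, pat1 t a b = true ↔ G.Adj (vmap c [x] a) (vmap c [x] b) := by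
  intro a b
  rcases Nat.lt_or_ge a.val 7 with ha | ha <;> rcases Nat.lt_or_ge b.val 7 with hb | hb
  · rw [vmap_in c _ a ha, vmap_in c _ b hb]
    unfold pat1; rw [if_pos ha, if_pos hb]; exact hc ⟨a.val, ha⟩ ⟨b.val, hb⟩
  · rw [vmap_in c _ a ha, vmap_out c _ b (by omega), show b.val - 7 = 0 by omega]
    unfold pat1; rw [if_pos ha, if_neg (by omega)]
    exact (hx ⟨a.val, ha⟩).trans (G.adj_comm _ _)
  · rw [vmap_in c _ b hb, vmap_out c _ a (by omega), show a.val - 7 = 0 by omega]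
    unfold pat1; rw [if_neg (by omega), if_pos hb]
    exact hx ⟨b.val, hb⟩
  · have hab : a = b := Fin.ext (by omega)
    subst hab
    rw [vmap_out c _ a (by omega)]
    unfold pat1; rw [if_neg (by omega), if_neg (by omega)]
    simp

lemma hadj2 {e : Bool} (hc : ∀ a b : Fin 7, cycB a.val b.val = true ↔ G.Adj (c a) (c b))
    (hx : ∀ a : Fin 7, t.testBit a.val = true ↔ G.Adj x (c a))
    (hy : ∀ a : Fin 7, s.testBit a.val = true ↔ G.Adj y (c a))
    (he : e = true ↔ G.Adj x y) :
    ∀ a b : Fin 9, pat2 t s e a b = true ↔ G.Adj (vmap c [x, y] a) (vmap c [x, y] b) := by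
  intro a b
  rcases Nat.lt_or_ge a.val 7 with ha | ha <;> rcases Nat.lt_or_ge b.val 7 with hb | hb
  · rw [vmap_in c _ a ha, vmap_in c _ b hb]
    unfold pat2; rw [if_pos ha, if_pos hb]; exact hc ⟨a.val, ha⟩ ⟨b.val, hb⟩
  · rw [vmap_in c _ a ha, vmap_out c _ b (by omega)]
    unfold pat2; rw [if_pos ha, if_neg (by omega)]
    rcases (show b.val = 7 ∨ b.val = 8 by omega) with h | h <;>
      rw [show b.val - 7 = b.val - 7 from rfl, h] <;> norm_num
    · exact (hx ⟨a.val, ha⟩).trans (G.adj_comm _ _)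
    · exact (hy ⟨a.val, ha⟩).trans (G.adj_comm _ _)
  · rw [vmap_in c _ b hb, vmap_out c _ a (by omega)]
    unfold pat2; rw [if_neg (by omega)]
    rcases (show a.val = 7 ∨ a.val = 8 by omega) with h | h <;> rw [h] <;> norm_num <;>
      rw [if_pos hb]
    · exact hx ⟨b.val, hb⟩
    · exact hy ⟨b.val, hb⟩
  · rw [vmap_out c _ a (by omega), vmap_out c _ b (by omega)]
    unfold pat2; rw [if_neg (by omega)]
    rcases (show a.val = 7 ∨ a.val = 8 by omega) with h1 | h1 <;>
      rcases (show b.val = 7 ∨ b.val = 8 by omega) with h2 | h2 <;>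
        rw [h1, h2] <;> norm_num <;>
      first
        | exact G.irrefl
        | exact he
        | exact he.trans (G.adj_comm _ _)
        | exact iff_of_true rfl (he.mp rfl)
        | exact iff_of_false (fun hh => by simp at hh) (fun hh => (he.not.mp (by simp)) hh)

lemma hadjB (hc : ∀ a b : Fin 7, cycB a.val b.val = true ↔ G.Adj (c a) (c b))
    (hx : ∀ a : Fin 7, t.testBit a.val = true ↔ G.Adj x (c a))
    (hy : ∀ a : Fin 7, t.testBit a.val = true ↔ G.Adj y (c a))
    (hz : ∀ a : Fin 7, s.testBit a.val = true ↔ G.Adj z (c a))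
    (hxy : G.Adj x y) (hxz : G.Adj x z) (hyz : ¬ G.Adj y z) :
    ∀ a b : Fin 10, patB t s a b = true ↔ G.Adj (vmap c [x, y, z] a) (vmap c [x, y, z] b) := by
  intro a b
  rcases Nat.lt_or_ge a.val 7 with ha | ha <;> rcases Nat.lt_or_ge b.val 7 with hb | hb
  · rw [vmap_in c _ a ha, vmap_in c _ b hb]
    unfold patB; rw [if_pos ha, if_pos hb]; exact hc ⟨a.val, ha⟩ ⟨b.val, hb⟩
  · rw [vmap_in c _ a ha, vmap_out c _ b (by omega)]
    unfold patB; rw [if_pos ha, if_neg (by omega)]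
    rcases (show b.val = 7 ∨ b.val = 8 ∨ b.val = 9 by omega) with h | h | h <;>
      rw [h] <;> norm_num
    · exact (hx ⟨a.val, ha⟩).trans (G.adj_comm _ _)
    · exact (hy ⟨a.val, ha⟩).trans (G.adj_comm _ _)
    · exact (hz ⟨a.val, ha⟩).trans (G.adj_comm _ _)
  · rw [vmap_in c _ b hb, vmap_out c _ a (by omega)]
    unfold patB; rw [if_neg (by omega), if_pos hb]
    rcases (show a.val = 7 ∨ a.val = 8 ∨ a.val = 9 by omega) with h | h | h <;>
      rw [h] <;> norm_num
    · exact hx ⟨b.val, hb⟩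
    · exact hy ⟨b.val, hb⟩
    · exact hz ⟨b.val, hb⟩
  · rw [vmap_out c _ a (by omega), vmap_out c _ b (by omega)]
    unfold patB; rw [if_neg (by omega), if_neg (by omega)]
    rcases (show a.val = 7 ∨ a.val = 8 ∨ a.val = 9 by omega) with h1 | h1 | h1 <;>
      rcases (show b.val = 7 ∨ b.val = 8 ∨ b.val = 9 by omega) with h2 | h2 | h2 <;>
        rw [h1, h2] <;> norm_num <;>
      first
        | exact G.irrefl
        | exact hxy
        | exact hxz
        | exact G.adj_symm hxy
        | exact G.adj_symm hxz
        | exact hyz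
        | exact fun h => hyz (G.adj_symm h)

end Hadj


section DecideFacts

set_option maxRecDepth 10000

lemma orb_iff (p q : Bool) : (p || q) = true ↔ (p = true ∨ q = true) := by
  cases p <;> cases q <;> simp

lemma booleq : ∀ p q : Bool, (p = true ↔ q = true) → p = q := by decide

lemma hcycB : ∀ a b : Fin 7, cycB a.val b.val = true ↔ (SimpleGraph.cycleGraph 7).Adj a b := by
  decide

lemma hmaskbit : ∀ (u : Finset (Fin 7)) (a : Fin 7),
    (∑ b ∈ u, 2 ^ b.val).testBit a.val = decide (a ∈ u) := by decide

lemma hmasklt : ∀ u : Finset (Fin 7), (∑ b ∈ u, 2 ^ b.val) < 128 := by decide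

lemma hallow : ∀ u : Finset (Fin 7), allowedMask (∑ b ∈ u, 2 ^ b.val) = true →
    ∃ i : Fin 22, typeMask i = ∑ b ∈ u, 2 ^ b.val := by decide

lemma harcbit : ∀ j a : Fin 7,
    (typeMask ⟨j.val, by omega⟩).testBit a.val = (cycB j.val a.val || decide (j = a)) := by
  decide

lemma tminj : ∀ i i' : Fin 22,
    (∀ a : Fin 7, (typeMask i).testBit a.val = (typeMask i').testBit a.val) → i = i' := by decide

lemma hincfacts : ∀ i j : Fin 22, incompB i j = true → 7 ≤ i.val ∧ 7 ≤ j.val ∧ i ≠ j := by decide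

end DecideFacts


/-- If a finite simple graph `G` contains no induced `4K₁`, no induced `C₄` and no
induced `C₆`, but contains an induced `C₇`, then `V(G)` admits a `k`-uniform partition
for some `7 ≤ k ≤ 13`: a partition into `k` parts, each inducing a clique, with all
possible edges or no edges between any two distinct parts. -/
theorem uniform_partition_of_4K1_C4_C6_free_with_C7 {V : Type*} [Fintype V]
    (G : SimpleGraph V)
    (h4K1 : ¬ HasInducedCopy (⊥ : SimpleGraph (Fin 4)) G)
    (hC4 : ¬ HasInducedCopy (SimpleGraph.cycleGraph 4) G)
    (hC6 : ¬ HasInducedCopy (SimpleGraph.cycleGraph 6) G)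
    (hC7 : HasInducedCopy (SimpleGraph.cycleGraph 7) G) :
    ∃ k : ℕ, 7 ≤ k ∧ k ≤ 13 ∧
      ∃ P : Fin k → Set V,
        (∀ v : V, ∃! i : Fin k, v ∈ P i) ∧
        (∀ i : Fin k, G.IsClique (P i)) ∧
        (∀ i j : Fin k, i ≠ j →
          (∀ u ∈ P i, ∀ v ∈ P j, G.Adj u v) ∨ (∀ u ∈ P i, ∀ v ∈ P j, ¬ G.Adj u v)) := by
    classical
  obtain ⟨cemb, hcyc⟩ := hC7
  set c : Fin 7 → V := ⇑cemb with hcdef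
  have hcinj : Function.Injective c := cemb.injective
  have hc : ∀ a b : Fin 7, cycB a.val b.val = true ↔ G.Adj (c a) (c b) :=
    fun a b => (hcycB a b).trans (hcyc a b)
  -- the contradiction dispatcher
  have dispatch : (HasInducedCopy (⊥ : SimpleGraph (Fin 4)) G ∨
      HasInducedCopy (SimpleGraph.cycleGraph 4) G ∨
      HasInducedCopy (SimpleGraph.cycleGraph 6) G) → False := by
    rintro (h | h | h)
    exacts [h4K1 h, hC4 h, hC6 h]
  -- mask facts
  -- classification of every vertex
  have classify : ∀ v : V, ∃ i : Fin 22,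
      ∀ a : Fin 7, (typeMask i).testBit a.val = true ↔ (G.Adj v (c a) ∨ v = c a) := by
    intro v
    by_cases hvc : ∃ j, v = c j
    · obtain ⟨j, rfl⟩ := hvc
      refine ⟨⟨j.val, by omega⟩, fun a => ?_⟩
      rw [harcbit j a]
      constructor
      · intro h
        rcases (orb_iff _ _).mp h with h | h
        · exact Or.inl ((hc j a).mp h)
        · exact Or.inr (congrArg c (of_decide_eq_true h))
      · rintro (h | h)
        · exact (orb_iff _ _).mpr (Or.inl ((hc j a).mpr h))
        · exact (orb_iff _ _).mpr (Or.inr (decide_eq_true (hcinj h)))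
    · push_neg at hvc
      set u : Finset (Fin 7) := Finset.univ.filter (fun a => G.Adj v (c a)) with hu
      set m : ℕ := ∑ b ∈ u, 2 ^ b.val with hm
      have hmv : ∀ a : Fin 7, m.testBit a.val = true ↔ G.Adj v (c a) := by
        intro a
        rw [hm, hmaskbit u a, decide_eq_true_eq, hu]
        simp
      by_cases hall : allowedMask m = true
      · obtain ⟨i, hi⟩ := hallow u hall
        refine ⟨i, fun a => ?_⟩
        rw [hi, ← hm]
        exact (hmv a).trans (or_iff_left (hvc a)).symm
      · exfalso
        have hA := checkA ⟨m, hmasklt u⟩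
        rw [Bool.or_eq_true] at hA
        rcases hA with hA | hA
        · exact hall hA
        · refine dispatch (entryOK_spec hA (vmap c [v]) ?_ (hadj1 hc hmv))
          refine vmap_inj rfl c [v] rfl hcinj (by simp) ?_
          simpa using hvc
  choose idx hidx using classify
  have idx_c : ∀ j : Fin 7, idx (c j) = ⟨j.val, by omega⟩ := by
    intro j
    refine tminj _ _ fun a => booleq _ _ ?_
    rw [hidx (c j) a, harcbit j a]
    constructor
    · rintro (h | h)
      · exact (orb_iff _ _).mpr (Or.inl ((hc j a).mpr h))
      · exact (orb_iff _ _).mpr (Or.inr (decide_eq_true (hcinj h)))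
    · intro h
      rcases (orb_iff _ _).mp h with h | h
      · exact Or.inl ((hc j a).mp h)
      · exact Or.inr (congrArg c (of_decide_eq_true h))
  have idx_out : ∀ v : V, (∀ j, v ≠ c j) →
      ∀ a : Fin 7, (typeMask (idx v)).testBit a.val = true ↔ G.Adj v (c a) :=
    fun v hv a => (hidx v a).trans (or_iff_left (hv a))
  have idx_ge7_out : ∀ v : V, 7 ≤ (idx v).val → ∀ j, v ≠ c j := by
    intro v h7 j hj
    rw [hj, idx_c j] at h7
    have : j.val < 7 := j.isLt
    simp only [] at h7
    omega
  -- same class implies adjacent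
  have same_adj : ∀ v w : V, v ≠ w → idx v = idx w → G.Adj v w := by
    intro v w hvw hieq
    by_contra hnadj
    have key : ∀ v w : V, v ≠ w → idx v = idx w → ¬ G.Adj v w → (∃ j, v = c j) → False := by
      rintro v w hvw hieq hnadj ⟨j, rfl⟩
      have hwc : ∀ j', w ≠ c j' := by
        intro j' hj'
        subst hj'
        rw [idx_c, idx_c] at hieq
        exact hvw (congrArg c (Fin.ext (by simpa [Fin.ext_iff] using hieq)))
      have hbit : (typeMask (idx w)).testBit j.val = true := by
        rw [← hieq, idx_c j, harcbit j j]
        simp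
      exact hnadj (G.adj_symm ((idx_out w hwc j).mp hbit))
    by_cases hvc : ∃ j, v = c j
    · exact key v w hvw hieq hnadj hvc
    · by_cases hwc : ∃ j, w = c j
      · exact key w v hvw.symm hieq.symm (fun h => hnadj (G.adj_symm h)) hwc
      · push_neg at hvc
        push_neg at hwc
        have hneed : need2 (idx v) (idx v) false = true := by simp [need2]
        have h2 := check2 (idx v) (idx v) false hneed
        refine dispatch (entryOK_spec h2 (vmap c [v, w]) ?_ ?_)
        · refine vmap_inj rfl c [v, w] rfl hcinj (by simp [hvw]) ?_
          intro a ha j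
          rcases List.mem_pair.mp ha with rfl | rfl
          exacts [hvc j, hwc j]
        · refine hadj2 hc (idx_out v hvc) ?_ (by simp [hnadj])
          rw [hieq]
          exact idx_out w hwc
  -- twin property
  have twins : ∀ v w u : V, idx v = idx w → u ≠ v → u ≠ w → G.Adj v u → G.Adj w u := by
    intro v w u hieq hu1 hu2 hadjvu
    by_contra hnadj
    have hvw : v ≠ w := by rintro rfl; exact hnadj hadjvu
    by_cases huc : ∃ a, u = c a
    · obtain ⟨a, rfl⟩ := huc
      have hbit : (typeMask (idx v)).testBit a.val = true :=
        (hidx v a).mpr (Or.inl hadjvu)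
      rw [hieq] at hbit
      rcases (hidx w a).mp hbit with h | h
      · exact hnadj h
      · exact hu2 h.symm
    · push_neg at huc
      by_cases hvc : ∃ j, v = c j
      · obtain ⟨j, rfl⟩ := hvc
        have hwc : ∀ j', w ≠ c j' := by
          intro j' hj'
          subst hj'
          rw [idx_c, idx_c] at hieq
          exact hvw (congrArg c (Fin.ext (by simpa [Fin.ext_iff] using hieq)))
        have hj7 : idx w = ⟨j.val, by omega⟩ := by rw [← hieq, idx_c]
        have hubit : (typeMask (idx u)).testBit j.val = true :=
          (idx_out u huc j).mpr (G.adj_symm hadjvu)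
        have hneed : need2 (idx w) (idx u) false = true := by
          have : (idx w).val < 7 := by rw [hj7]; exact j.isLt
          simp only [need2, Bool.or_eq_true, Bool.and_eq_true, decide_eq_true_eq]
          refine Or.inl (Or.inr ⟨this, ?_⟩)
          have : (typeMask (idx u)).testBit (idx w).val = true := by rw [hj7]; exact hubit
          simp [this]
        have h2 := check2 (idx w) (idx u) false hneed
        refine dispatch (entryOK_spec h2 (vmap c [w, u]) ?_ ?_)
        · refine vmap_inj rfl c [w, u] rfl hcinj (by simp [Ne.symm hu2]) ?_
          intro a ha j'
          rcases List.mem_pair.mp ha with rfl | rfl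
          exacts [hwc j', huc j']
        · exact hadj2 hc (idx_out w hwc) (idx_out u huc) (by simp [hnadj])
      · push_neg at hvc
        by_cases hwc : ∃ j, w = c j
        · obtain ⟨j, rfl⟩ := hwc
          have hj7 : idx v = ⟨j.val, by omega⟩ := by rw [hieq, idx_c]
          have hubit : (typeMask (idx u)).testBit j.val = false := by
            rw [← Bool.not_eq_true]
            intro hbit
            rcases (hidx u j).mp hbit with h | h
            · exact hnadj (G.adj_symm h)
            · exact huc j h
          have hneed : need2 (idx v) (idx u) true = true := by
            have h7 : (idx v).val < 7 := by rw [hj7]; exact j.isLt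
            simp only [need2, Bool.or_eq_true, Bool.and_eq_true, decide_eq_true_eq]
            refine Or.inl (Or.inr ⟨h7, ?_⟩)
            have : (typeMask (idx u)).testBit (idx v).val = false := by rw [hj7]; exact hubit
            simp [this]
          have h2 := check2 (idx v) (idx u) true hneed
          refine dispatch (entryOK_spec h2 (vmap c [v, u]) ?_ ?_)
          · refine vmap_inj rfl c [v, u] rfl hcinj (by simp [Ne.symm hu1]) ?_
            intro a ha j'
            rcases List.mem_pair.mp ha with rfl | rfl
            exacts [hvc j', huc j']
          · exact hadj2 hc (idx_out v hvc) (idx_out u huc) (by simp [hadjvu])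
        · push_neg at hwc
          have h2 := checkB (idx v) (idx u)
          refine dispatch (entryOK_spec h2 (vmap c [v, w, u]) ?_ ?_)
          · refine vmap_inj rfl c [v, w, u] rfl hcinj ?_ ?_
            · simp [hvw, Ne.symm hu1, Ne.symm hu2]
            · intro a ha j'
              rcases List.mem_cons.mp ha with rfl | ha
              · exact hvc j'
              rcases List.mem_pair.mp ha with rfl | rfl
              exacts [hwc j', huc j']
          · refine hadjB hc (idx_out v hvc) ?_ (idx_out u huc)
              (same_adj v w hvw hieq) hadjvu hnadj
            rw [hieq]
            exact idx_out w hwc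
  -- incompatible pairs cannot both be realized
  have nopair : ∀ v w : V, incompB (idx v) (idx w) = true → False := by
    intro v w hbad
    obtain ⟨hi7, hj7, hij⟩ := hincfacts _ _ hbad
    have hvc := idx_ge7_out v hi7
    have hwc := idx_ge7_out w hj7
    have hvw : v ≠ w := by rintro rfl; exact hij rfl
    have hneed : need2 (idx v) (idx w) (decide (G.Adj v w)) = true := by
      simp [need2, hbad]
    have h2 := check2 _ _ _ hneed
    refine dispatch (entryOK_spec h2 (vmap c [v, w]) ?_ ?_)
    · refine vmap_inj rfl c [v, w] rfl hcinj (by simp [hvw]) ?_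
      intro a ha j'
      rcases List.mem_pair.mp ha with rfl | rfl
      exacts [hvc j', hwc j']
    · exact hadj2 hc (idx_out v hvc) (idx_out w hwc) (by simp)
    -- the set of inhabited types
  let T : Finset (Fin 22) := Finset.univ.image idx
  have hTmem : ∀ i : Fin 22, i ∈ T ↔ ∃ v : V, idx v = i := by
    intro i
    simp [T]
  have nopair' : ∀ a b : Fin 22, (incompB a b || incompB b a) = true →
      a ∈ T → b ∈ T → False := by
    intro a b hab ha hb
    obtain ⟨v, rfl⟩ := (hTmem a).mp ha
    obtain ⟨w, rfl⟩ := (hTmem b).mp hb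
    rcases (orb_iff _ _).mp hab with h | h
    · exact nopair v w h
    · exact nopair w v h
  -- lower bound
  have hlow : 7 ≤ T.card := by
    have hsub : (Finset.univ.filter (fun i : Fin 22 => i.val < 7)) ⊆ T := by
      intro i hi
      rw [Finset.mem_filter] at hi
      refine (hTmem i).mpr ⟨c ⟨i.val, hi.2⟩, ?_⟩
      rw [idx_c]
    have hcard : (Finset.univ.filter (fun i : Fin 22 => i.val < 7)).card = 7 := by decide
    exact hcard ▸ Finset.card_le_card hsub
  -- upper bound
  have hup : T.card ≤ 13 := by
    have bound1 : ∀ g : Finset (Fin 22),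
        (∀ a b : Fin 22, a ∈ g → b ∈ g → a ≠ b → (incompB a b || incompB b a) = true) →
        (T ∩ g).card ≤ 1 := by
      intro g hg
      by_contra h
      obtain ⟨a, ha, b, hb, hab⟩ := (Finset.one_lt_card (s := T ∩ g)).mp (by omega)
      rw [Finset.mem_inter] at ha hb
      exact nopair' a b (hg a b ha.2 hb.2 hab) ha.1 hb.1
    have hg1 := bound1 {7, 10, 15} (by decide)
    have hg2 := bound1 {8, 11, 20} (by decide)
    have hg4 := bound1 {9, 13, 17} (by decide)
    have hg5 := bound1 {21} (by decide)
    have hg3 : (T ∩ ({12, 14, 16, 18, 19} : Finset (Fin 22))).card ≤ 2 := by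
      by_contra h
      obtain ⟨a, ha, b, hb, d, hd, hab, had, hbd⟩ := (Finset.two_lt_card (s := T ∩ ({12, 14, 16, 18, 19} : Finset (Fin 22)))).mp (by omega)
      rw [Finset.mem_inter] at ha hb hd
      have key : ∀ a b d : Fin 22, a ∈ ({12, 14, 16, 18, 19} : Finset (Fin 22)) →
          b ∈ ({12, 14, 16, 18, 19} : Finset (Fin 22)) →
          d ∈ ({12, 14, 16, 18, 19} : Finset (Fin 22)) → a ≠ b → a ≠ d → b ≠ d →
          ((incompB a b || incompB b a) = true ∧ a ∈ T → b ∈ T → False) →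
          True := fun _ _ _ _ _ _ _ _ _ _ => trivial
      have trich : ∀ a b d : Fin 22, a ∈ ({12, 14, 16, 18, 19} : Finset (Fin 22)) →
          b ∈ ({12, 14, 16, 18, 19} : Finset (Fin 22)) →
          d ∈ ({12, 14, 16, 18, 19} : Finset (Fin 22)) → a ≠ b → a ≠ d → b ≠ d →
          ((incompB a b || incompB b a) = true ∨ (incompB a d || incompB d a) = true ∨
            (incompB b d || incompB d b) = true) := by decide
      rcases trich a b d ha.2 hb.2 hd.2 hab had hbd with h' | h' | h'
      · exact nopair' a b h' ha.1 hb.1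
      · exact nopair' a d h' ha.1 hd.1
      · exact nopair' b d h' hb.1 hd.1
    have hgA : (T ∩ Finset.univ.filter (fun i : Fin 22 => i.val < 7)).card ≤ 7 := by
      refine le_trans (Finset.card_le_card Finset.inter_subset_right) ?_
      exact le_of_eq (by decide)
    have hsub : T ⊆ (((((Finset.univ.filter (fun i : Fin 22 => i.val < 7) ∪ {7, 10, 15}) ∪
        {8, 11, 20}) ∪ {9, 13, 17}) ∪ {21}) ∪ {12, 14, 16, 18, 19}) := by
      intro i _
      have : ∀ i : Fin 22, i ∈ (((((Finset.univ.filter (fun i : Fin 22 => i.val < 7) ∪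
          {7, 10, 15}) ∪ {8, 11, 20}) ∪ {9, 13, 17}) ∪ {21}) ∪ {12, 14, 16, 18, 19}) := by
        decide
      exact this i
    have step : ∀ (X Y : Finset (Fin 22)), (T ∩ (X ∪ Y)).card ≤ (T ∩ X).card + (T ∩ Y).card := by
      intro X Y
      rw [Finset.inter_union_distrib_left]
      exact Finset.card_union_le _ _
    calc T.card = (T ∩ _).card := by rw [Finset.inter_eq_left.mpr hsub]
      _ ≤ _ + (T ∩ ({12, 14, 16, 18, 19} : Finset (Fin 22))).card := step _ _
      _ ≤ (_ + (T ∩ ({21} : Finset (Fin 22))).card) + _ := Nat.add_le_add (step _ _) le_rfl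
      _ ≤ ((_ + (T ∩ ({9, 13, 17} : Finset (Fin 22))).card) + _) + _ :=
          Nat.add_le_add (Nat.add_le_add (step _ _) le_rfl) le_rfl
      _ ≤ (((_ + (T ∩ ({8, 11, 20} : Finset (Fin 22))).card) + _) + _) + _ :=
          Nat.add_le_add (Nat.add_le_add (Nat.add_le_add (step _ _) le_rfl) le_rfl) le_rfl
      _ ≤ ((((_ + (T ∩ ({7, 10, 15} : Finset (Fin 22))).card) + _) + _) + _) + _ :=
          Nat.add_le_add (Nat.add_le_add (Nat.add_le_add (Nat.add_le_add (step _ _)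
            le_rfl) le_rfl) le_rfl) le_rfl
      _ ≤ 7 + 1 + 1 + 1 + 1 + 2 :=
          Nat.add_le_add (Nat.add_le_add (Nat.add_le_add (Nat.add_le_add
            (Nat.add_le_add hgA hg1) hg2) hg4) hg5) hg3
      _ ≤ 13 := by norm_num
  -- build the partition
  refine ⟨T.card, hlow, hup, ?_⟩
  have ecard : Fintype.card {i // i ∈ T} = T.card := Fintype.card_coe T
  let e : {i // i ∈ T} ≃ Fin T.card := Fintype.equivFinOfCardEq ecard
  refine ⟨fun i => {v | idx v = (e.symm i : Fin 22)}, ?_, ?_, ?_⟩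
  · intro v
    have hvT : idx v ∈ T := (hTmem _).mpr ⟨v, rfl⟩
    refine ⟨e ⟨idx v, hvT⟩, ?_, ?_⟩
    · show idx v = _
      rw [Equiv.symm_apply_apply]
    · intro i hi
      have : e.symm i = ⟨idx v, hvT⟩ := Subtype.ext hi.symm
      rw [← this, Equiv.apply_symm_apply]
  · intro i u hu w hw hne
    exact same_adj u w hne (hu.trans hw.symm)
  · intro i j hij
    obtain ⟨v0, hv0⟩ := (hTmem _).mp (e.symm i).2
    obtain ⟨w0, hw0⟩ := (hTmem _).mp (e.symm j).2
    have hne : ((e.symm i : Fin 22)) ≠ ((e.symm j : Fin 22)) := by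
      intro h
      exact hij (by simpa using e.symm.injective (Subtype.ext h))
    have hv0' : idx v0 = (e.symm i : Fin 22) := hv0
    have hw0' : idx w0 = (e.symm j : Fin 22) := hw0
    have cross : ∀ p q : V, idx p = (e.symm i : Fin 22) → idx q = (e.symm j : Fin 22) → p ≠ q :=
      fun p q hp hq h => hne (by rw [← hp, ← hq, h])
    by_cases hadj0 : G.Adj v0 w0
    · left
      intro u hu w hw
      have hu' : idx u = (e.symm i : Fin 22) := hu
      have hw' : idx w = (e.symm j : Fin 22) := hw
      have h1 : G.Adj u w0 := by
        rcases eq_or_ne u v0 with rfl | hne1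
        · exact hadj0
        · exact twins v0 u w0 (hv0'.trans hu'.symm) (Ne.symm (cross v0 w0 hv0' hw0'))
            (Ne.symm (cross u w0 hu' hw0')) hadj0
      rcases eq_or_ne w w0 with rfl | hne2
      · exact h1
      · exact G.adj_symm (twins w0 w u (hw0'.trans hw'.symm) (cross u w0 hu' hw0')
          (cross u w hu' hw') (G.adj_symm h1))
    · right
      intro u hu w hw hadjuw
      have hu' : idx u = (e.symm i : Fin 22) := hu
      have hw' : idx w = (e.symm j : Fin 22) := hw
      apply hadj0
      have h1 : G.Adj w0 u := by
        rcases eq_or_ne w w0 with rfl | hne2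
        · exact G.adj_symm hadjuw
        · exact twins w w0 u (hw'.trans hw0'.symm) (cross u w hu' hw')
            (cross u w0 hu' hw0') (G.adj_symm hadjuw)
      rcases eq_or_ne u v0 with rfl | hne1
      · exact G.adj_symm h1
      · exact twins u v0 w0 (hu'.trans hv0'.symm) (Ne.symm (cross u w0 hu' hw0'))
          (Ne.symm (cross v0 w0 hv0' hw0')) (G.adj_symm h1)
end

section
/- Let G be a finite simple graph and let P_1, ..., P_k be a partition of V(G) into modules, i.e., such that for each pair i ≠ j, between P_i and P_j there are either all possible edges or no edges in G. Let c_i = χ(G[P_i]) be the chromatic number of the subgraph induced by P_i, and let G' be the graph on vertex set {(i, j) : 1 ≤ i ≤ k, 1 ≤ j ≤ c_i} in which (i, j) and (i, j') are adjacent for all j ≠ j', and (i, j) and (i', j') with i ≠ i' are adjacent if and only if there are (all) edges between P_i and P_{i'} in G. Then χ(G') = χ(G). -/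
/-- Given a partition of the vertices of `G` into modules `P 1, …, P k` and numbers
`c 1, …, c k`, the graph obtained by replacing each module `P i` by a clique on `c i`
vertices, preserving the all-or-no adjacency pattern between distinct parts: vertices
`(i, j)` and `(i, j')` with `j ≠ j'` are adjacent, and `(i, j)` and `(i', j')` with
`i ≠ i'` are adjacent iff all edges between `P i` and `P i'` are present in `G`. -/
def moduleReplacementGraph {V : Type*} (G : SimpleGraph V) {k : ℕ}
    (P : Fin k → Set V) (c : Fin k → ℕ) : SimpleGraph ((i : Fin k) × Fin (c i)) where
  Adj p q := p ≠ q ∧ (p.1 = q.1 ∨ ∀ u ∈ P p.1, ∀ v ∈ P q.1, G.Adj u v)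
  symm := by
    constructor
    rintro p q ⟨hne, h⟩
    refine ⟨hne.symm, ?_⟩
    rcases h with h | h
    · exact Or.inl h.symm
    · exact Or.inr fun u hu v hv => (h v hv u hu).symm
  loopless := by
    constructor
    intro p h
    exact h.1 rfl

/-! A colouring of `G` uses at least `χ(G[P i])` colours on each module `P i`, and two modules
joined by all edges receive disjoint sets of colours; so giving the clique of `P i` distinct
colours among those used on `P i` colours `G'` with the same palette. Conversely, sending
`v ∈ P i` to `(i, φᵢ v)` for an optimal colouring `φᵢ` of `G[P i]` is a homomorphism `G → G'`:
an edge between two distinct modules forces all edges between them. -/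

namespace SimpleGraph

variable {V α : Type*} {G : SimpleGraph V}

theorem Coloring.chromaticNumber_induce_le_card_image [Finite α] (C : G.Coloring α)
    (s : Set V) : (G.induce s).chromaticNumber ≤ Nat.card (C '' s) := by
  have := Fintype.ofFinite (C '' s)
  let D : (G.induce s).Coloring (C '' s) :=
    .mk (fun v => ⟨C v, Set.mem_image_of_mem C v.2⟩)
      fun h heq => C.valid h (congrArg Subtype.val heq)
  simpa only [Nat.card_eq_fintype_card] using D.colorable.chromaticNumber_le

end SimpleGraph

open SimpleGraph

section

variable {V : Type*} {G : SimpleGraph V} {k : ℕ} {P : Fin k → Set V} {c : Fin k → ℕ}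

theorem colorable_moduleReplacementGraph {n : ℕ}
    (hc : ∀ i, c i ≤ (G.induce (P i)).chromaticNumber) (hG : G.Colorable n) :
    (moduleReplacementGraph G P c).Colorable n := by
  obtain ⟨C⟩ := hG
  have e (i : Fin k) : Fin (c i) ↪ C '' P i := by
    have := Fintype.ofFinite (C '' P i)
    refine (Function.Embedding.nonempty_of_card_le ?_).some
    rw [Fintype.card_fin, ← Nat.card_eq_fintype_card, ← ENat.natCast_le_natCast]
    exact (hc i).trans (C.chromaticNumber_induce_le_card_image _)
  refine ⟨.mk (fun p => e p.1 p.2) ?_⟩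
  rintro ⟨i, a⟩ ⟨j, b⟩ ⟨hne, rfl | hall⟩ heq
  · exact hne (congrArg _ ((e i).injective (Subtype.ext heq)))
  · obtain ⟨u, hu, hua⟩ := (e i a).2
    obtain ⟨v, hv, hvb⟩ := (e j b).2
    exact C.valid (hall u hu v hv) (hua.trans (heq.trans hvb.symm))

def moduleReplacementHom
    (hhom : ∀ i j : Fin k, i ≠ j →
      (∀ u ∈ P i, ∀ v ∈ P j, G.Adj u v) ∨ (∀ u ∈ P i, ∀ v ∈ P j, ¬ G.Adj u v))
    (idx : V → Fin k) (hidx : ∀ v, v ∈ P (idx v))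
    (f : ∀ i, (G.induce (P i)).Coloring (Fin (c i))) : G →g moduleReplacementGraph G P c where
  toFun v := ⟨idx v, f (idx v) ⟨v, hidx v⟩⟩
  map_rel' {u v} huv := by
    have hne : ∀ i j (hu : u ∈ P i) (hv : v ∈ P j),
        (⟨i, f i ⟨u, hu⟩⟩ : (i : Fin k) × Fin (c i)) ≠ ⟨j, f j ⟨v, hv⟩⟩ := by
      intro i j hu hv heq
      obtain ⟨rfl, hf⟩ := Sigma.mk.inj_iff.mp heq
      exact (f i).valid (v := ⟨u, hu⟩) (w := ⟨v, hv⟩) huv (eq_of_heq hf)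
    refine ⟨hne _ _ _ _, or_iff_not_imp_left.mpr fun hdiff => ?_⟩
    exact (hhom _ _ hdiff).resolve_right fun hnone => hnone u (hidx u) v (hidx v) huv

end

theorem chromaticNumber_moduleReplacement_general {V : Type*} (G : SimpleGraph V)
    (k : ℕ) (P : Fin k → Set V)
    (hpart : ∀ v : V, ∃! i : Fin k, v ∈ P i)
    (hhom : ∀ i j : Fin k, i ≠ j →
      (∀ u ∈ P i, ∀ v ∈ P j, G.Adj u v) ∨ (∀ u ∈ P i, ∀ v ∈ P j, ¬ G.Adj u v))
    (c : Fin k → ℕ)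
    (hc : ∀ i : Fin k, (G.induce (P i)).chromaticNumber = (c i : ℕ∞)) :
    (moduleReplacementGraph G P c).chromaticNumber = G.chromaticNumber := by
  choose idx hidx using fun v => (hpart v).exists
  have hcol (i : Fin k) : (G.induce (P i)).Colorable (c i) :=
    chromaticNumber_le_iff_colorable.mp (hc i).le
  exact le_antisymm
    (chromaticNumber_le_of_forall_imp fun _ =>
      colorable_moduleReplacementGraph fun i => (hc i).ge)
    (chromaticNumber_mono_of_hom (moduleReplacementHom hhom idx hidx fun i => (hcol i).some))

/-- Let `G` be a finite simple graph, let `P 1, …, P k` be a partition of `V(G)` into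
modules (between any two distinct parts there are all possible edges or no edges), and
let `c i = χ(G[P i])`.  Then the graph `G'` obtained from `G` by replacing each module
`P i` by a clique on `c i` vertices satisfies `χ(G') = χ(G)`. -/
theorem chromaticNumber_moduleReplacement {V : Type*} [Fintype V] (G : SimpleGraph V)
    (k : ℕ) (P : Fin k → Set V)
    (hpart : ∀ v : V, ∃! i : Fin k, v ∈ P i)
    (hhom : ∀ i j : Fin k, i ≠ j →
      (∀ u ∈ P i, ∀ v ∈ P j, G.Adj u v) ∨ (∀ u ∈ P i, ∀ v ∈ P j, ¬ G.Adj u v))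
    (c : Fin k → ℕ)
    (hc : ∀ i : Fin k, (G.induce (P i)).chromaticNumber = (c i : ℕ∞)) :
    (moduleReplacementGraph G P c).chromaticNumber = G.chromaticNumber :=
  chromaticNumber_moduleReplacement_general G k P hpart hhom c hc
end
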